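/- arXiv:2210.04389 — 5 statements merged into one kernel-verified Lean document; each statement's English description precedes it below -/
import Mathlib

section
/- In the observed-data mediation model with binary treatment and binary mediator, for any nuisance estimates (ã, f̃, μ̃) as specified and any d, d' ∈ {0,1}, the bias of the one-step estimator admits the exact three-term second-order decomposition: E[ψ̃_{d,d'}(O)] − φ(d,d') = E[ Σ_{m∈{0,1}} (1 − a(d'|X)/ã(d'|X))·(f̃(m|X,d')/f(m|X,d') − 1)·μ̃(X,d,m)·f(m|X,d') ] + E[ Σ_{m∈{0,1}} (1 − (f(m|X,d)/f̃(m|X,d))·(f̃(m|X,d')/f(m|X,d')))·(μ̃(X,d,m) − μ(X,d,m))·f(m|X,d') ] + E[ Σ_{m∈{0,1}} (1 − a(d|X)/ã(d|X))·(f̃(m|X,d')/f̃(m|X,d))·(μ̃(X,d,m) − μ(X,d,m))·f(m|X,d) ]. -/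
open MeasureTheory ProbabilityTheory
open scoped ENNReal

/-- Observed-data mediation model with binary treatment `D` and binary mediator `M`.
`a d x` is `P(D = d | X = x)`, `f m x d` is `P(M = m | X = x, D = d)` and
`u x d m` is `E[Y | X = x, D = d, M = m]`. -/
structure MediationModel (Ω 𝓧 : Type*) [MeasurableSpace Ω] [MeasurableSpace 𝓧]
    (c Cbar ρlo ρhi R : ℝ) where
  P : Measure Ω
  isProb : IsProbabilityMeasure P
  X : Ω → 𝓧
  D : Ω → Fin 2
  M : Ω → Fin 2
  Y : Ω → ℝ
  hX : Measurable X
  hD : Measurable D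
  hM : Measurable M
  hY : Integrable Y P
  hc : 0 < c
  hcC : c ≤ Cbar
  hC : Cbar < 1
  hρ1 : 0 < ρlo
  hρ2 : ρlo ≤ ρhi
  hρ3 : ρhi < 1
  hR : 0 < R
  a : Fin 2 → 𝓧 → ℝ
  f : Fin 2 → 𝓧 → Fin 2 → ℝ
  u : 𝓧 → Fin 2 → Fin 2 → ℝ
  ha_meas : ∀ d, Measurable (a d)
  hf_meas : ∀ m d, Measurable fun x => f m x d
  hu_meas : ∀ d m, Measurable fun x => u x d m
  ha_eq : ∀ d, (fun ω => a d (X ω)) =ᵐ[P]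
    P[(fun ω => if D ω = d then (1 : ℝ) else 0) | MeasurableSpace.comap X inferInstance]
  hf_eq : ∀ m, (fun ω => f m (X ω) (D ω)) =ᵐ[P]
    P[(fun ω => if M ω = m then (1 : ℝ) else 0) |
      MeasurableSpace.comap (fun ω => (X ω, D ω)) inferInstance]
  hu_eq : (fun ω => u (X ω) (D ω) (M ω)) =ᵐ[P]
    P[Y | MeasurableSpace.comap (fun ω => (X ω, D ω, M ω)) inferInstance]
  ha_bdd : ∀ d, ∀ᵐ ω ∂P, a d (X ω) ∈ Set.Ioo c Cbar
  hf_bdd : ∀ m d, ∀ᵐ ω ∂P, f m (X ω) d ∈ Set.Icc ρlo ρhi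
  hu_bdd : ∀ d m, ∀ᵐ ω ∂P, |u (X ω) d m| ≤ R

/-- A triple of nuisance estimates `(ã, f̃, μ̃)` satisfying the stated bounds
(almost everywhere under the law `μX` of the covariates) and the normalizations
`ã(0|x) = 1 - ã(1|x)`, `f̃(0|x,d) = 1 - f̃(1|x,d)`. -/
structure Nuisance (𝓧 : Type*) [MeasurableSpace 𝓧] (μX : Measure 𝓧)
    (c Cbar ρlo ρhi R : ℝ) where
  a : Fin 2 → 𝓧 → ℝ
  f : Fin 2 → 𝓧 → Fin 2 → ℝ
  u : 𝓧 → Fin 2 → Fin 2 → ℝ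
  ha_meas : ∀ d, Measurable (a d)
  hf_meas : ∀ m d, Measurable fun x => f m x d
  hu_meas : ∀ d m, Measurable fun x => u x d m
  ha_bdd : ∀ d, ∀ᵐ x ∂μX, a d x ∈ Set.Ioo c Cbar
  hf_bdd : ∀ m d, ∀ᵐ x ∂μX, f m x d ∈ Set.Icc ρlo ρhi
  hu_bdd : ∀ d m, ∀ᵐ x ∂μX, |u x d m| ≤ R
  ha_norm : ∀ x, a 0 x = 1 - a 1 x
  hf_norm : ∀ x d, f 0 x d = 1 - f 1 x d

variable {Ω 𝓧 : Type*} [MeasurableSpace Ω] [MeasurableSpace 𝓧]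
  {c Cbar ρlo ρhi R : ℝ}

/-- The mediation functional `φ(d,d') = E[Σ_m μ(X,d,m) f(m|X,d')]`. -/
noncomputable def MediationModel.phi (Mdl : MediationModel Ω 𝓧 c Cbar ρlo ρhi R)
    (d d' : Fin 2) : ℝ :=
  ∫ ω, (∑ m : Fin 2, Mdl.u (Mdl.X ω) d m * Mdl.f m (Mdl.X ω) d') ∂Mdl.P

/-- The uncentered efficient influence function value `ψ_{d,d'}` built from generic
nuisance functions `(aF, fF, uF)`. -/
noncomputable def psiFun (X : Ω → 𝓧) (D M : Ω → Fin 2) (Y : Ω → ℝ)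
    (aF : Fin 2 → 𝓧 → ℝ) (fF : Fin 2 → 𝓧 → Fin 2 → ℝ) (uF : 𝓧 → Fin 2 → Fin 2 → ℝ)
    (d d' : Fin 2) (ω : Ω) : ℝ :=
  (if D ω = d then (1 : ℝ) else 0) * fF (M ω) (X ω) d' / (aF d (X ω) * fF (M ω) (X ω) d)
      * (Y ω - uF (X ω) d (M ω))
    + (1 - (if D ω = d' then (1 : ℝ) else 0) / aF d' (X ω))
      * (∑ m : Fin 2, uF (X ω) d m * fF m (X ω) d')
    + (if D ω = d' then (1 : ℝ) else 0) / aF d' (X ω) * uF (X ω) d (M ω)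

/-- `ψ̃_{d,d'}` : the estimated influence function. -/
noncomputable def MediationModel.psiT (Mdl : MediationModel Ω 𝓧 c Cbar ρlo ρhi R)
    (nu : Nuisance 𝓧 (Measure.map Mdl.X Mdl.P) c Cbar ρlo ρhi R) (d d' : Fin 2) : Ω → ℝ :=
  psiFun Mdl.X Mdl.D Mdl.M Mdl.Y nu.a nu.f nu.u d d'

/-- `ψ_{d,d'}` : influence function with the true nuisances. -/
noncomputable def MediationModel.psi (Mdl : MediationModel Ω 𝓧 c Cbar ρlo ρhi R)
    (d d' : Fin 2) : Ω → ℝ :=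
  psiFun Mdl.X Mdl.D Mdl.M Mdl.Y Mdl.a Mdl.f Mdl.u d d'

/-- L2 error of the propensity estimate. -/
noncomputable def MediationModel.rA (Mdl : MediationModel Ω 𝓧 c Cbar ρlo ρhi R)
    (nu : Nuisance 𝓧 (Measure.map Mdl.X Mdl.P) c Cbar ρlo ρhi R) (d : Fin 2) : ℝ :=
  Real.sqrt (∫ ω, (nu.a d (Mdl.X ω) - Mdl.a d (Mdl.X ω)) ^ 2 ∂Mdl.P)

/-- L2 error of the mediator-density estimate, under the conditional law given `D = 0`. -/
noncomputable def MediationModel.rF (Mdl : MediationModel Ω 𝓧 c Cbar ρlo ρhi R)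
    (nu : Nuisance 𝓧 (Measure.map Mdl.X Mdl.P) c Cbar ρlo ρhi R) (d : Fin 2) : ℝ :=
  Real.sqrt (∫ ω, (nu.f (Mdl.M ω) (Mdl.X ω) d - Mdl.f (Mdl.M ω) (Mdl.X ω) d) ^ 2
    ∂(Mdl.P[|{ω | Mdl.D ω = 0}]))

/-- L2 error of the outcome-regression estimate, under the conditional law given `D = 0`. -/
noncomputable def MediationModel.rU (Mdl : MediationModel Ω 𝓧 c Cbar ρlo ρhi R)
    (nu : Nuisance 𝓧 (Measure.map Mdl.X Mdl.P) c Cbar ρlo ρhi R) (d : Fin 2) : ℝ :=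
  Real.sqrt (∫ ω, (nu.u (Mdl.X ω) d (Mdl.M ω) - Mdl.u (Mdl.X ω) d (Mdl.M ω)) ^ 2
    ∂(Mdl.P[|{ω | Mdl.D ω = 0}]))

/-!
The bias is computed with the tower property, conditioning successively on `(X, D, M)`,
`(X, D)` and `X`. Given `(X, D, M)`, the weighted residual `Y - μ(X, D, M)` of `ψ̃` has mean
zero; the rest of `ψ̃` is a function of `(X, D, M)`, whose mean is obtained by summing `M` against
`f(·|X, D)` and then `D` against `a(·|X)`. This leaves, at each `x`, a finite sum over
`δ, m ∈ {0, 1}` which, once `a(0|x) + a(1|x) = 1` is used, rearranges into the three products of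
estimation errors. Positivity bounds every nuisance and its reciprocal, so all integrands are
essentially bounded and the integrals may be split freely.
-/

section EssentiallyBounded

variable {α : Type*} [MeasurableSpace α] {μ : Measure α} {g h : α → ℝ}

theorem MeasureTheory.MemLp.mul_top (hg : MemLp g ∞ μ) (hh : MemLp h ∞ μ) :
    MemLp (fun x => g x * h x) ∞ μ :=
  hh.mul' hg

theorem MeasureTheory.MemLp.div_top (hg : MemLp g ∞ μ) (hh : MemLp (fun x => (h x)⁻¹) ∞ μ) :
    MemLp (fun x => g x / h x) ∞ μ := by
  simpa only [div_eq_mul_inv] using hg.mul_top hh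

theorem memLp_top_of_ae_abs_le {C : ℝ} (hg : AEStronglyMeasurable g μ)
    (hC : ∀ᵐ x ∂μ, |g x| ≤ C) : MemLp g ∞ μ :=
  memLp_top_of_bound hg C (by simpa only [Real.norm_eq_abs] using hC)

theorem memLp_top_of_ae_mem_Icc {lo hi : ℝ} (hg : AEStronglyMeasurable g μ)
    (hmem : ∀ᵐ x ∂μ, g x ∈ Set.Icc lo hi) : MemLp g ∞ μ :=
  memLp_top_of_ae_abs_le hg (C := max |lo| |hi|) <| hmem.mono fun _ hx =>
    abs_le_max_abs_abs hx.1 hx.2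

theorem memLp_top_inv_of_ae_le {lo : ℝ} (hlo : 0 < lo) (hg : AEStronglyMeasurable g μ)
    (hle : ∀ᵐ x ∂μ, lo ≤ g x) : MemLp (fun x => (g x)⁻¹) ∞ μ :=
  memLp_top_of_ae_abs_le (C := lo⁻¹) hg.aemeasurable.inv.aestronglyMeasurable <|
    hle.mono fun _ hx => by
      rw [abs_inv, abs_of_pos (hlo.trans_le hx)]
      exact inv_anti₀ hlo hx

variable {ι : Type*} [DecidableEq ι] [MeasurableSpace ι] [MeasurableSingletonClass ι] {T : α → ι}

theorem memLp_top_ite_eq (hT : Measurable T) (i : ι) :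
    MemLp (fun x => if T x = i then (1 : ℝ) else 0) ∞ μ :=
  memLp_top_of_ae_mem_Icc (lo := 0) (hi := 1)
    (measurable_const.ite (hT (measurableSet_singleton i)) measurable_const).aestronglyMeasurable
    (.of_forall fun x => by split_ifs <;> norm_num)

theorem memLp_top_apply_of_forall [Fintype ι] (hT : Measurable T) {k : α → ι → ℝ}
    (hk : ∀ i, MemLp (fun x => k x i) ∞ μ) : MemLp (fun x => k x (T x)) ∞ μ := by
  have hsum : (fun x => k x (T x)) =
      fun x => ∑ i, (if T x = i then (1 : ℝ) else 0) * k x i := by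
    funext x
    simp
  rw [hsum]
  exact memLp_finsetSum _ fun i _ => (memLp_top_ite_eq hT i).mul_top (hk i)

end EssentiallyBounded

section ConditionalLaw

variable {α β ι : Type*} {m m₀ : MeasurableSpace α} {μ : Measure α}

theorem integral_mul_eq_of_ae_eq_condExp [IsFiniteMeasure μ] (hm : m ≤ m₀) {w g v : α → ℝ}
    (hw : StronglyMeasurable[m] w) (hwg : Integrable (fun x => w x * g x) μ)
    (hg : Integrable g μ) (hv : v =ᵐ[μ] μ[g|m]) :
    Integrable (fun x => w x * v x) μ ∧ ∫ x, w x * g x ∂μ = ∫ x, w x * v x ∂μ := by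
  have pull_out : μ[fun x => w x * g x|m] =ᵐ[μ] fun x => w x * v x :=
    (condExp_mul_of_stronglyMeasurable_left hw hwg hg).trans <| hv.mono fun x hx => by
      simp only [Pi.mul_apply, hx]
  exact ⟨integrable_condExp.congr pull_out,
    (integral_condExp hm).symm.trans (integral_congr_ae pull_out)⟩

variable [MeasurableSpace β] [Fintype ι] [DecidableEq ι] [MeasurableSpace ι]
  [MeasurableSingletonClass ι] {Z : α → β} {T : α → ι} {p : ι → β → ℝ}

theorem sum_condProb_ae_eq_one [IsProbabilityMeasure μ] (hZ : Measurable[m₀] Z)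
    (hT : Measurable[m₀] T)
    (hp : ∀ i, (fun x => p i (Z x)) =ᵐ[μ]
      μ[fun x => if T x = i then (1 : ℝ) else 0 | MeasurableSpace.comap Z inferInstance]) :
    ∀ᵐ x ∂μ, ∑ i, p i (Z x) = 1 := by
  have hsum : ∑ i, (fun x => if T x = i then (1 : ℝ) else 0) = fun _ => 1 := by
    funext x
    simp
  have hcond := condExp_finsetSum (μ := μ) (s := Finset.univ)
    (fun i _ => (memLp_top_ite_eq hT i).integrable le_top)
    (MeasurableSpace.comap Z inferInstance)
  rw [hsum, condExp_const hZ.comap_le] at hcond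
  filter_upwards [hcond, ae_all_iff.2 hp] with x hx hpx
  rw [Finset.sum_apply] at hx
  rw [Finset.sum_congr rfl fun i _ => hpx i]
  exact hx.symm

theorem integral_comp_eq_integral_sum_condProb [IsFiniteMeasure μ] (hZ : Measurable[m₀] Z)
    (hT : Measurable[m₀] T)
    (hp : ∀ i, (fun x => p i (Z x)) =ᵐ[μ]
      μ[fun x => if T x = i then (1 : ℝ) else 0 | MeasurableSpace.comap Z inferInstance])
    {g : β → ι → ℝ} (hg : ∀ i, Measurable fun z => g z i)
    (hgi : ∀ i, Integrable (fun x => g (Z x) i) μ) :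
    ∫ x, g (Z x) (T x) ∂μ = ∫ x, ∑ i, g (Z x) i * p i (Z x) ∂μ := by
  have hind : ∀ i, Integrable (fun x => g (Z x) i * if T x = i then (1 : ℝ) else 0) μ :=
    fun i => (hgi i).mul_of_top_left (memLp_top_ite_eq hT i)
  have tower : ∀ i, Integrable (fun x => g (Z x) i * p i (Z x)) μ ∧
      ∫ x, g (Z x) i * (if T x = i then (1 : ℝ) else 0) ∂μ = ∫ x, g (Z x) i * p i (Z x) ∂μ :=
    fun i => integral_mul_eq_of_ae_eq_condExp hZ.comap_le
      ((hg i).comp (comap_measurable Z)).stronglyMeasurable (hind i)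
      ((memLp_top_ite_eq hT i).integrable le_top) (hp i)
  calc ∫ x, g (Z x) (T x) ∂μ
      = ∫ x, ∑ i, g (Z x) i * (if T x = i then (1 : ℝ) else 0) ∂μ := by simp
    _ = ∑ i, ∫ x, g (Z x) i * (if T x = i then (1 : ℝ) else 0) ∂μ :=
        integral_finsetSum _ fun i _ => hind i
    _ = ∫ x, ∑ i, g (Z x) i * p i (Z x) ∂μ := by
        rw [integral_finsetSum _ fun i _ => (tower i).1]
        exact Finset.sum_congr rfl fun i _ => (tower i).2

end ConditionalLaw

namespace Nuisance

variable {μX : Measure 𝓧} (nu : Nuisance 𝓧 μX c Cbar ρlo ρhi R) (d d' : Fin 2)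

noncomputable def ipwWeight (x : 𝓧) (δ m : Fin 2) : ℝ :=
  (if δ = d then (1 : ℝ) else 0) * nu.f m x d' / (nu.a d x * nu.f m x d)

noncomputable def treatmentTerm (x : 𝓧) (δ : Fin 2) : ℝ :=
  (1 - (if δ = d' then (1 : ℝ) else 0) / nu.a d' x) * ∑ m : Fin 2, nu.u x d m * nu.f m x d'

theorem measurable_ipwWeight (δ m : Fin 2) : Measurable fun x => nu.ipwWeight d d' x δ m := by
  have := nu.ha_meas; have := nu.hf_meas
  unfold ipwWeight; fun_prop

theorem measurable_treatmentTerm (δ : Fin 2) :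
    Measurable fun x => nu.treatmentTerm d d' x δ := by
  have := nu.ha_meas; have := nu.hf_meas; have := nu.hu_meas
  unfold treatmentTerm; fun_prop

end Nuisance

namespace MediationModel

variable (Mdl : MediationModel Ω 𝓧 c Cbar ρlo ρhi R)
  (nu : Nuisance 𝓧 (Measure.map Mdl.X Mdl.P) c Cbar ρlo ρhi R) (d d' : Fin 2)

instance : IsProbabilityMeasure Mdl.P := Mdl.isProb

theorem memLp_a (δ : Fin 2) : MemLp (fun ω => Mdl.a δ (Mdl.X ω)) ∞ Mdl.P :=
  memLp_top_of_ae_mem_Icc ((Mdl.ha_meas δ).comp Mdl.hX).aestronglyMeasurable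
    ((Mdl.ha_bdd δ).mono fun _ h => Set.Ioo_subset_Icc_self h)

theorem memLp_f (m δ : Fin 2) : MemLp (fun ω => Mdl.f m (Mdl.X ω) δ) ∞ Mdl.P :=
  memLp_top_of_ae_mem_Icc ((Mdl.hf_meas m δ).comp Mdl.hX).aestronglyMeasurable (Mdl.hf_bdd m δ)

theorem memLp_inv_f (m δ : Fin 2) : MemLp (fun ω => (Mdl.f m (Mdl.X ω) δ)⁻¹) ∞ Mdl.P :=
  memLp_top_inv_of_ae_le Mdl.hρ1 ((Mdl.hf_meas m δ).comp Mdl.hX).aestronglyMeasurable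
    ((Mdl.hf_bdd m δ).mono fun _ h => h.1)

theorem memLp_u (δ m : Fin 2) : MemLp (fun ω => Mdl.u (Mdl.X ω) δ m) ∞ Mdl.P :=
  memLp_top_of_ae_abs_le ((Mdl.hu_meas δ m).comp Mdl.hX).aestronglyMeasurable (Mdl.hu_bdd δ m)

theorem ae_nuisance_a_mem (δ : Fin 2) : ∀ᵐ ω ∂Mdl.P, nu.a δ (Mdl.X ω) ∈ Set.Ioo c Cbar :=
  ae_of_ae_map Mdl.hX.aemeasurable (nu.ha_bdd δ)

theorem ae_nuisance_f_mem (m δ : Fin 2) :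
    ∀ᵐ ω ∂Mdl.P, nu.f m (Mdl.X ω) δ ∈ Set.Icc ρlo ρhi :=
  ae_of_ae_map Mdl.hX.aemeasurable (nu.hf_bdd m δ)

theorem memLp_inv_nuisance_a (δ : Fin 2) : MemLp (fun ω => (nu.a δ (Mdl.X ω))⁻¹) ∞ Mdl.P :=
  memLp_top_inv_of_ae_le Mdl.hc ((nu.ha_meas δ).comp Mdl.hX).aestronglyMeasurable
    ((Mdl.ae_nuisance_a_mem nu δ).mono fun _ h => h.1.le)

theorem memLp_nuisance_f (m δ : Fin 2) : MemLp (fun ω => nu.f m (Mdl.X ω) δ) ∞ Mdl.P :=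
  memLp_top_of_ae_mem_Icc ((nu.hf_meas m δ).comp Mdl.hX).aestronglyMeasurable
    (Mdl.ae_nuisance_f_mem nu m δ)

theorem memLp_inv_nuisance_f (m δ : Fin 2) :
    MemLp (fun ω => (nu.f m (Mdl.X ω) δ)⁻¹) ∞ Mdl.P :=
  memLp_top_inv_of_ae_le Mdl.hρ1 ((nu.hf_meas m δ).comp Mdl.hX).aestronglyMeasurable
    ((Mdl.ae_nuisance_f_mem nu m δ).mono fun _ h => h.1)

theorem memLp_nuisance_u (δ m : Fin 2) : MemLp (fun ω => nu.u (Mdl.X ω) δ m) ∞ Mdl.P :=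
  memLp_top_of_ae_abs_le ((nu.hu_meas δ m).comp Mdl.hX).aestronglyMeasurable
    (ae_of_ae_map Mdl.hX.aemeasurable (nu.hu_bdd δ m))

theorem memLp_apply_D_M {g : 𝓧 → Fin 2 → Fin 2 → ℝ}
    (hg : ∀ δ m, MemLp (fun ω => g (Mdl.X ω) δ m) ∞ Mdl.P) :
    MemLp (fun ω => g (Mdl.X ω) (Mdl.D ω) (Mdl.M ω)) ∞ Mdl.P :=
  memLp_top_apply_of_forall Mdl.hM fun m =>
    memLp_top_apply_of_forall (k := fun ω δ => g (Mdl.X ω) δ m) Mdl.hD fun δ => hg δ m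

theorem integral_eq_integral_sum_propensity {h : 𝓧 → Fin 2 → ℝ}
    (hh : ∀ δ, Measurable fun x => h x δ)
    (hhi : ∀ δ, Integrable (fun ω => h (Mdl.X ω) δ) Mdl.P) :
    ∫ ω, h (Mdl.X ω) (Mdl.D ω) ∂Mdl.P =
      ∫ ω, ∑ δ, h (Mdl.X ω) δ * Mdl.a δ (Mdl.X ω) ∂Mdl.P :=
  integral_comp_eq_integral_sum_condProb Mdl.hX Mdl.hD Mdl.ha_eq hh hhi

theorem integral_eq_integral_sum_mediatorLaw {g : 𝓧 → Fin 2 → Fin 2 → ℝ}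
    (hg : ∀ δ m, Measurable fun x => g x δ m)
    (hgi : ∀ m, Integrable (fun ω => g (Mdl.X ω) (Mdl.D ω) m) Mdl.P) :
    ∫ ω, g (Mdl.X ω) (Mdl.D ω) (Mdl.M ω) ∂Mdl.P =
      ∫ ω, ∑ m, g (Mdl.X ω) (Mdl.D ω) m * Mdl.f m (Mdl.X ω) (Mdl.D ω) ∂Mdl.P :=
  integral_comp_eq_integral_sum_condProb (Z := fun ω => (Mdl.X ω, Mdl.D ω))
    (p := fun m z => Mdl.f m z.1 z.2) (g := fun z m => g z.1 z.2 m)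
    (Mdl.hX.prodMk Mdl.hD) Mdl.hM Mdl.hf_eq
    (fun m => measurable_from_prod_countable_left fun δ => hg δ m) hgi

theorem integral_mul_outcome_residual_eq_zero {g : 𝓧 → Fin 2 → Fin 2 → ℝ}
    (hg : ∀ δ m, Measurable fun x => g x δ m)
    (hgb : ∀ δ m, MemLp (fun ω => g (Mdl.X ω) δ m) ∞ Mdl.P) :
    ∫ ω, g (Mdl.X ω) (Mdl.D ω) (Mdl.M ω)
      * (Mdl.Y ω - Mdl.u (Mdl.X ω) (Mdl.D ω) (Mdl.M ω)) ∂Mdl.P = 0 := by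
  have hXDM : Measurable fun ω => (Mdl.X ω, Mdl.D ω, Mdl.M ω) :=
    Mdl.hX.prodMk (Mdl.hD.prodMk Mdl.hM)
  have hg_XDM : Measurable fun p : 𝓧 × Fin 2 × Fin 2 => g p.1 p.2.1 p.2.2 :=
    measurable_from_prod_countable_left fun y => hg y.1 y.2
  have hGY : Integrable (fun ω => g (Mdl.X ω) (Mdl.D ω) (Mdl.M ω) * Mdl.Y ω) Mdl.P :=
    Mdl.hY.mul_of_top_right (Mdl.memLp_apply_D_M hgb)
  obtain ⟨hGU, hGY_eq⟩ := integral_mul_eq_of_ae_eq_condExp hXDM.comap_le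
    (w := fun ω => g (Mdl.X ω) (Mdl.D ω) (Mdl.M ω))
    (hg_XDM.comp (comap_measurable _)).stronglyMeasurable hGY Mdl.hY Mdl.hu_eq
  simp only [mul_sub]
  rw [integral_sub hGY hGU, hGY_eq, sub_self]

/-- The part of `ψ̃_{d,d'}` that depends on the mediator, with `Y` replaced by `μ(x, δ, m)`. -/
noncomputable def mediatorTerm (x : 𝓧) (δ m : Fin 2) : ℝ :=
  nu.ipwWeight d d' x δ m * (Mdl.u x δ m - nu.u x d m)
    + (if δ = d' then (1 : ℝ) else 0) / nu.a d' x * nu.u x d m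

/-- `E[ψ̃_{d,d'} | X = x, D = δ]`. -/
noncomputable def psiCondMean (x : 𝓧) (δ : Fin 2) : ℝ :=
  ∑ m : Fin 2, Mdl.mediatorTerm nu d d' x δ m * Mdl.f m x δ + nu.treatmentTerm d d' x δ

theorem psiT_eq (ω : Ω) :
    Mdl.psiT nu d d' ω = Mdl.mediatorTerm nu d d' (Mdl.X ω) (Mdl.D ω) (Mdl.M ω)
      + nu.treatmentTerm d d' (Mdl.X ω) (Mdl.D ω)
      + nu.ipwWeight d d' (Mdl.X ω) (Mdl.D ω) (Mdl.M ω)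
        * (Mdl.Y ω - Mdl.u (Mdl.X ω) (Mdl.D ω) (Mdl.M ω)) := by
  simp only [psiT, psiFun, mediatorTerm, Nuisance.ipwWeight, Nuisance.treatmentTerm]
  ring

theorem sum_psiCondMean_mul_a_sub_eq (x : 𝓧) (ha : Mdl.a 0 x + Mdl.a 1 x = 1)
    (hna : ∀ δ, nu.a δ x ≠ 0) (hf : ∀ m δ, Mdl.f m x δ ≠ 0) (hnf : ∀ m δ, nu.f m x δ ≠ 0) :
    (∑ δ : Fin 2, Mdl.psiCondMean nu d d' x δ * Mdl.a δ x)
      - ∑ m : Fin 2, Mdl.u x d m * Mdl.f m x d' =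
    (∑ m : Fin 2, (1 - Mdl.a d' x / nu.a d' x) * (nu.f m x d' / Mdl.f m x d' - 1)
        * nu.u x d m * Mdl.f m x d')
      + (∑ m : Fin 2, (1 - Mdl.f m x d / nu.f m x d * (nu.f m x d' / Mdl.f m x d'))
        * (nu.u x d m - Mdl.u x d m) * Mdl.f m x d')
      + ∑ m : Fin 2, (1 - Mdl.a d x / nu.a d x) * (nu.f m x d' / nu.f m x d)
        * (nu.u x d m - Mdl.u x d m) * Mdl.f m x d := by
  have ha1 : Mdl.a 1 x = 1 - Mdl.a 0 x := by linarith
  have := hna 0; have := hna 1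
  have := hf 0 0; have := hf 0 1; have := hf 1 0; have := hf 1 1
  have := hnf 0 0; have := hnf 0 1; have := hnf 1 0; have := hnf 1 1
  simp only [psiCondMean, mediatorTerm, Nuisance.ipwWeight, Nuisance.treatmentTerm,
    Fin.sum_univ_two]
  fin_cases d <;> fin_cases d' <;> simp [ha1] <;> field_simp <;> ring

theorem ae_sum_psiCondMean_mul_a_sub_eq : ∀ᵐ ω ∂Mdl.P,
    (∑ δ : Fin 2, Mdl.psiCondMean nu d d' (Mdl.X ω) δ * Mdl.a δ (Mdl.X ω))
      - ∑ m : Fin 2, Mdl.u (Mdl.X ω) d m * Mdl.f m (Mdl.X ω) d' =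
    (∑ m : Fin 2, (1 - Mdl.a d' (Mdl.X ω) / nu.a d' (Mdl.X ω))
        * (nu.f m (Mdl.X ω) d' / Mdl.f m (Mdl.X ω) d' - 1)
        * nu.u (Mdl.X ω) d m * Mdl.f m (Mdl.X ω) d')
      + (∑ m : Fin 2, (1 - Mdl.f m (Mdl.X ω) d / nu.f m (Mdl.X ω) d
          * (nu.f m (Mdl.X ω) d' / Mdl.f m (Mdl.X ω) d'))
        * (nu.u (Mdl.X ω) d m - Mdl.u (Mdl.X ω) d m) * Mdl.f m (Mdl.X ω) d')
      + ∑ m : Fin 2, (1 - Mdl.a d (Mdl.X ω) / nu.a d (Mdl.X ω))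
        * (nu.f m (Mdl.X ω) d' / nu.f m (Mdl.X ω) d)
        * (nu.u (Mdl.X ω) d m - Mdl.u (Mdl.X ω) d m) * Mdl.f m (Mdl.X ω) d := by
  have ha : ∀ᵐ ω ∂Mdl.P, Mdl.a 0 (Mdl.X ω) + Mdl.a 1 (Mdl.X ω) = 1 := by
    simpa only [Fin.sum_univ_two] using sum_condProb_ae_eq_one Mdl.hX Mdl.hD Mdl.ha_eq
  have hna : ∀ᵐ ω ∂Mdl.P, ∀ δ, nu.a δ (Mdl.X ω) ≠ 0 := ae_all_iff.2 fun δ =>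
    (Mdl.ae_nuisance_a_mem nu δ).mono fun _ h => (Mdl.hc.trans h.1).ne'
  have hf : ∀ᵐ ω ∂Mdl.P, ∀ m δ, Mdl.f m (Mdl.X ω) δ ≠ 0 := ae_all_iff.2 fun m =>
    ae_all_iff.2 fun δ => (Mdl.hf_bdd m δ).mono fun _ h => (Mdl.hρ1.trans_le h.1).ne'
  have hnf : ∀ᵐ ω ∂Mdl.P, ∀ m δ, nu.f m (Mdl.X ω) δ ≠ 0 := ae_all_iff.2 fun m =>
    ae_all_iff.2 fun δ => (Mdl.ae_nuisance_f_mem nu m δ).mono fun _ h => (Mdl.hρ1.trans_le h.1).ne'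
  filter_upwards [ha, hna, hf, hnf] with ω ha hna hf hnf
  exact Mdl.sum_psiCondMean_mul_a_sub_eq nu d d' _ ha hna hf hnf

theorem memLp_ipwWeight (δ m : Fin 2) :
    MemLp (fun ω => nu.ipwWeight d d' (Mdl.X ω) δ m) ∞ Mdl.P :=
  ((memLp_const _).mul_top (Mdl.memLp_nuisance_f nu m d')).div_top <| by
    simpa only [mul_inv] using
      (Mdl.memLp_inv_nuisance_a nu d).mul_top (Mdl.memLp_inv_nuisance_f nu m d)

theorem memLp_treatmentTerm (δ : Fin 2) :
    MemLp (fun ω => nu.treatmentTerm d d' (Mdl.X ω) δ) ∞ Mdl.P :=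
  ((memLp_const 1).sub ((memLp_const _).div_top (Mdl.memLp_inv_nuisance_a nu d'))).mul_top
    (memLp_finsetSum _ fun m _ =>
      (Mdl.memLp_nuisance_u nu d m).mul_top (Mdl.memLp_nuisance_f nu m d'))

theorem memLp_mediatorTerm (δ m : Fin 2) :
    MemLp (fun ω => Mdl.mediatorTerm nu d d' (Mdl.X ω) δ m) ∞ Mdl.P :=
  ((Mdl.memLp_ipwWeight nu d d' δ m).mul_top
      ((Mdl.memLp_u δ m).sub (Mdl.memLp_nuisance_u nu d m))).add
    (((memLp_const _).div_top (Mdl.memLp_inv_nuisance_a nu d')).mul_top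
      (Mdl.memLp_nuisance_u nu d m))

theorem memLp_sum_mediatorTerm_mul_f (δ : Fin 2) : MemLp (fun ω => ∑ m : Fin 2,
    Mdl.mediatorTerm nu d d' (Mdl.X ω) δ m * Mdl.f m (Mdl.X ω) δ) ∞ Mdl.P :=
  memLp_finsetSum _ fun m _ => (Mdl.memLp_mediatorTerm nu d d' δ m).mul_top (Mdl.memLp_f m δ)

theorem memLp_psiCondMean (δ : Fin 2) :
    MemLp (fun ω => Mdl.psiCondMean nu d d' (Mdl.X ω) δ) ∞ Mdl.P :=
  (Mdl.memLp_sum_mediatorTerm_mul_f nu d d' δ).add (Mdl.memLp_treatmentTerm nu d d' δ)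

theorem measurable_mediatorTerm (δ m : Fin 2) :
    Measurable fun x => Mdl.mediatorTerm nu d d' x δ m := by
  have := nu.measurable_ipwWeight d d' δ m
  have := Mdl.hu_meas; have := nu.ha_meas; have := nu.hu_meas
  unfold mediatorTerm; fun_prop

theorem measurable_psiCondMean (δ : Fin 2) : Measurable fun x => Mdl.psiCondMean nu d d' x δ := by
  have := Mdl.measurable_mediatorTerm nu d d' δ; have := Mdl.hf_meas
  have := nu.measurable_treatmentTerm d d' δ
  unfold psiCondMean; fun_prop

theorem integral_psiT :
    ∫ ω, Mdl.psiT nu d d' ω ∂Mdl.P =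
      ∫ ω, ∑ δ : Fin 2, Mdl.psiCondMean nu d d' (Mdl.X ω) δ * Mdl.a δ (Mdl.X ω) ∂Mdl.P := by
  have hmed := (Mdl.memLp_apply_D_M (Mdl.memLp_mediatorTerm nu d d')).integrable le_top
  have htreat := (memLp_top_apply_of_forall Mdl.hD
    (Mdl.memLp_treatmentTerm nu d d')).integrable le_top
  have hres : Integrable (fun ω => nu.ipwWeight d d' (Mdl.X ω) (Mdl.D ω) (Mdl.M ω)
      * (Mdl.Y ω - Mdl.u (Mdl.X ω) (Mdl.D ω) (Mdl.M ω))) Mdl.P :=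
    (Mdl.hY.sub ((Mdl.memLp_apply_D_M Mdl.memLp_u).integrable le_top)).mul_of_top_right
      (Mdl.memLp_apply_D_M (Mdl.memLp_ipwWeight nu d d'))
  have hmed_treat : Integrable (fun ω => Mdl.mediatorTerm nu d d' (Mdl.X ω) (Mdl.D ω) (Mdl.M ω)
      + nu.treatmentTerm d d' (Mdl.X ω) (Mdl.D ω)) Mdl.P := hmed.add htreat
  have hmed_M : ∀ m, Integrable
      (fun ω => Mdl.mediatorTerm nu d d' (Mdl.X ω) (Mdl.D ω) m) Mdl.P := fun m =>
    (memLp_top_apply_of_forall (k := fun ω δ => Mdl.mediatorTerm nu d d' (Mdl.X ω) δ m) Mdl.hD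
      fun δ => Mdl.memLp_mediatorTerm nu d d' δ m).integrable le_top
  have hmed_sum := (memLp_top_apply_of_forall Mdl.hD
    (Mdl.memLp_sum_mediatorTerm_mul_f nu d d')).integrable le_top
  calc ∫ ω, Mdl.psiT nu d d' ω ∂Mdl.P
      = (∫ ω, Mdl.mediatorTerm nu d d' (Mdl.X ω) (Mdl.D ω) (Mdl.M ω) ∂Mdl.P)
        + (∫ ω, nu.treatmentTerm d d' (Mdl.X ω) (Mdl.D ω) ∂Mdl.P)
        + ∫ ω, nu.ipwWeight d d' (Mdl.X ω) (Mdl.D ω) (Mdl.M ω)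
          * (Mdl.Y ω - Mdl.u (Mdl.X ω) (Mdl.D ω) (Mdl.M ω)) ∂Mdl.P := by
        simp_rw [Mdl.psiT_eq nu d d']
        rw [integral_add hmed_treat hres, integral_add hmed htreat]
    _ = ∫ ω, Mdl.psiCondMean nu d d' (Mdl.X ω) (Mdl.D ω) ∂Mdl.P := by
        rw [Mdl.integral_mul_outcome_residual_eq_zero (nu.measurable_ipwWeight d d')
            (Mdl.memLp_ipwWeight nu d d'),
          Mdl.integral_eq_integral_sum_mediatorLaw (Mdl.measurable_mediatorTerm nu d d') hmed_M,
          add_zero, ← integral_add hmed_sum htreat]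
        rfl
    _ = _ := Mdl.integral_eq_integral_sum_propensity (Mdl.measurable_psiCondMean nu d d')
        fun δ => (Mdl.memLp_psiCondMean nu d d' δ).integrable le_top

theorem integrable_propensity_mediator_term : Integrable (fun ω => ∑ m : Fin 2,
    (1 - Mdl.a d' (Mdl.X ω) / nu.a d' (Mdl.X ω))
      * (nu.f m (Mdl.X ω) d' / Mdl.f m (Mdl.X ω) d' - 1)
      * nu.u (Mdl.X ω) d m * Mdl.f m (Mdl.X ω) d') Mdl.P :=
  (memLp_finsetSum _ fun m _ =>
    ((((memLp_const 1).sub ((Mdl.memLp_a d').div_top (Mdl.memLp_inv_nuisance_a nu d'))).mul_top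
      (((Mdl.memLp_nuisance_f nu m d').div_top (Mdl.memLp_inv_f m d')).sub
        (memLp_const 1))).mul_top
      (Mdl.memLp_nuisance_u nu d m)).mul_top (Mdl.memLp_f m d')).integrable le_top

theorem integrable_mediator_outcome_term : Integrable (fun ω => ∑ m : Fin 2,
    (1 - Mdl.f m (Mdl.X ω) d / nu.f m (Mdl.X ω) d
        * (nu.f m (Mdl.X ω) d' / Mdl.f m (Mdl.X ω) d'))
      * (nu.u (Mdl.X ω) d m - Mdl.u (Mdl.X ω) d m) * Mdl.f m (Mdl.X ω) d') Mdl.P :=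
  (memLp_finsetSum _ fun m _ =>
    (((memLp_const 1).sub (((Mdl.memLp_f m d).div_top (Mdl.memLp_inv_nuisance_f nu m d)).mul_top
      ((Mdl.memLp_nuisance_f nu m d').div_top (Mdl.memLp_inv_f m d')))).mul_top
      ((Mdl.memLp_nuisance_u nu d m).sub (Mdl.memLp_u d m))).mul_top
      (Mdl.memLp_f m d')).integrable le_top

theorem integrable_propensity_outcome_term : Integrable (fun ω => ∑ m : Fin 2,
    (1 - Mdl.a d (Mdl.X ω) / nu.a d (Mdl.X ω)) * (nu.f m (Mdl.X ω) d' / nu.f m (Mdl.X ω) d)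
      * (nu.u (Mdl.X ω) d m - Mdl.u (Mdl.X ω) d m) * Mdl.f m (Mdl.X ω) d) Mdl.P :=
  (memLp_finsetSum _ fun m _ =>
    ((((memLp_const 1).sub ((Mdl.memLp_a d).div_top (Mdl.memLp_inv_nuisance_a nu d))).mul_top
      ((Mdl.memLp_nuisance_f nu m d').div_top (Mdl.memLp_inv_nuisance_f nu m d))).mul_top
      ((Mdl.memLp_nuisance_u nu d m).sub (Mdl.memLp_u d m))).mul_top
      (Mdl.memLp_f m d)).integrable le_top

end MediationModel

/-- exact three-term second-order bias decomposition, Proposition A.1: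
for any nuisance estimates and any `d, d' ∈ {0,1}`,
`E[ψ̃_{d,d'}(O)] − φ(d,d')` equals the sum of the three second-order terms. -/
theorem bias_three_term_decomposition
    (Mdl : MediationModel Ω 𝓧 c Cbar ρlo ρhi R)
    (nu : Nuisance 𝓧 (Measure.map Mdl.X Mdl.P) c Cbar ρlo ρhi R)
    (d d' : Fin 2) :
    (∫ ω, Mdl.psiT nu d d' ω ∂Mdl.P) - Mdl.phi d d' =
      (∫ ω, (∑ m : Fin 2,
          (1 - Mdl.a d' (Mdl.X ω) / nu.a d' (Mdl.X ω))
            * (nu.f m (Mdl.X ω) d' / Mdl.f m (Mdl.X ω) d' - 1)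
            * nu.u (Mdl.X ω) d m * Mdl.f m (Mdl.X ω) d') ∂Mdl.P)
      + (∫ ω, (∑ m : Fin 2,
          (1 - Mdl.f m (Mdl.X ω) d / nu.f m (Mdl.X ω) d
              * (nu.f m (Mdl.X ω) d' / Mdl.f m (Mdl.X ω) d'))
            * (nu.u (Mdl.X ω) d m - Mdl.u (Mdl.X ω) d m) * Mdl.f m (Mdl.X ω) d') ∂Mdl.P)
      + (∫ ω, (∑ m : Fin 2,
          (1 - Mdl.a d (Mdl.X ω) / nu.a d (Mdl.X ω))
            * (nu.f m (Mdl.X ω) d' / nu.f m (Mdl.X ω) d)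
            * (nu.u (Mdl.X ω) d m - Mdl.u (Mdl.X ω) d m) * Mdl.f m (Mdl.X ω) d) ∂Mdl.P) := by
  have hpsi := (memLp_finsetSum Finset.univ fun δ _ =>
    (Mdl.memLp_psiCondMean nu d d' δ).mul_top (Mdl.memLp_a δ)).integrable le_top
  have hphi := (memLp_finsetSum Finset.univ fun m _ =>
    (Mdl.memLp_u d m).mul_top (Mdl.memLp_f m d')).integrable le_top
  have hA := Mdl.integrable_propensity_mediator_term nu d d'
  have hB := Mdl.integrable_mediator_outcome_term nu d d'
  rw [Mdl.integral_psiT, MediationModel.phi, ← integral_sub hpsi hphi,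
    integral_congr_ae (Mdl.ae_sum_psiCondMean_mul_a_sub_eq nu d d')]
  exact (integral_add (hA.add hB) (Mdl.integrable_propensity_outcome_term nu d d')).trans
    (congrArg (· + _) (integral_add' hA hB))
end

section
/- Multiple robustness: in the observed-data mediation model with binary treatment and binary mediator, if at least two of the three equalities ã = a, f̃ = f, μ̃ = μ hold (each meaning equality for all d, m ∈ {0,1} and almost every x), then E[ψ̃_{d,d'}(O)] = φ(d,d') for all d, d' ∈ {0,1}; in particular, with the true nuisance functions, E[ψ_{d,d'}(O)] = φ(d,d'). -/
open MeasureTheory ProbabilityTheory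
open scoped ENNReal

variable {Ω 𝓧 : Type*} [MeasurableSpace Ω] [MeasurableSpace 𝓧]
  {c Cbar ρlo ρhi R : ℝ}

/-! Conditioning successively on `(X, D, M)`, `(X, D)` and `X`, and integrating the binary mediator
and treatment out against `f` and `a`, turns `E[ψ̃_{d,d'}]` into `E[ψ̄(X)]` with
`ψ̄ = (a/ã)(d) Σₘ f(m|d) (f̃(m|d')/f̃(m|d)) (μ - μ̃)(d,m) + (a/ã)(d') Σₘ μ̃(d,m) (f - f̃)(m|d')
  + Σₘ μ̃(d,m) f̃(m|d')`.
If two of `ã, f̃, μ̃` are correct, the two error terms either vanish or recombine with the last sum,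
and `ψ̄(x)` becomes `Σₘ μ(x,d,m) f(m|x,d')`, the integrand of `φ(d,d')`. -/

section CondExp

variable {Ω α β : Type*} {mΩ : MeasurableSpace Ω} {P : Measure Ω}

theorem condExp_mul_ae_eq_of_stronglyMeasurable_left {m : MeasurableSpace Ω} {g Z r : Ω → ℝ}
    (hg : StronglyMeasurable[m] g) (hgZ : Integrable (fun ω => g ω * Z ω) P)
    (hZ : Integrable Z P) (hr : r =ᵐ[P] P[Z | m]) :
    P[fun ω => g ω * Z ω | m] =ᵐ[P] fun ω => g ω * r ω := by
  filter_upwards [condExp_mul_of_stronglyMeasurable_left hg hgZ hZ, hr] with ω hω hrω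
  rw [hrω]
  exact hω

theorem integral_eq_of_condExp_ae_eq [IsFiniteMeasure P] {m : MeasurableSpace Ω} (hm : m ≤ mΩ)
    {F G : Ω → ℝ} (h : P[F | m] =ᵐ[P] G) : ∫ ω, F ω ∂P = ∫ ω, G ω ∂P :=
  (integral_condExp hm).symm.trans (integral_congr_ae h)

theorem condExp_comp_ae_eq_sum_mul [IsFiniteMeasure P] [MeasurableSpace α] [MeasurableSpace β]
    [Fintype β] [DecidableEq β] [MeasurableSingletonClass β] {V : Ω → α} {W : Ω → β}
    (hV : Measurable V) (hW : Measurable W) {p : β → Ω → ℝ}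
    (hp : ∀ b, p b =ᵐ[P]
      P[fun ω => if W ω = b then (1 : ℝ) else 0 | MeasurableSpace.comap V inferInstance])
    {h : α → β → ℝ} (hh : ∀ b, Measurable fun x => h x b)
    (hint : Integrable (fun ω => h (V ω) (W ω)) P) :
    P[fun ω => h (V ω) (W ω) | MeasurableSpace.comap V inferInstance]
      =ᵐ[P] fun ω => ∑ b, h (V ω) b * p b ω := by
  have hind : ∀ b, Measurable fun ω => if W ω = b then (1 : ℝ) else 0 := fun b =>
    Measurable.ite (hW (measurableSet_singleton b)) measurable_const measurable_const
  have hterm : ∀ b, Integrable (fun ω => h (V ω) b * if W ω = b then (1 : ℝ) else 0) P :=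
    fun b => hint.mono (((hh b).comp hV).mul (hind b)).aestronglyMeasurable
      (ae_of_all _ fun ω => by split_ifs with hb <;> simp [hb])
  have hsplit : (fun ω => h (V ω) (W ω))
      = ∑ b, fun ω => h (V ω) b * if W ω = b then (1 : ℝ) else 0 := by
    ext ω
    simp [Finset.sum_apply]
  have hpull : ∀ b, P[fun ω => h (V ω) b * if W ω = b then (1 : ℝ) else 0 |
      MeasurableSpace.comap V inferInstance] =ᵐ[P] fun ω => h (V ω) b * p b ω := fun b =>
    condExp_mul_ae_eq_of_stronglyMeasurable_left
      ((hh b).comp (comap_measurable V)).stronglyMeasurable (hterm b)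
      ((integrable_const (1 : ℝ)).mono (hind b).aestronglyMeasurable
        (ae_of_all _ fun ω => by split_ifs <;> simp)) (hp b)
  rw [hsplit]
  filter_upwards [condExp_finsetSum (s := Finset.univ) (fun b _ => hterm b)
    (MeasurableSpace.comap V inferInstance), ae_all_iff.2 hpull] with ω hω hb
  rw [hω, Finset.sum_apply]
  exact Finset.sum_congr rfl fun b _ => hb b

theorem ae_sum_eq_one_of_condExp [IsFiniteMeasure P] [MeasurableSpace α] [MeasurableSpace β]
    [Fintype β] [DecidableEq β] [MeasurableSingletonClass β] {V : Ω → α} {W : Ω → β}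
    (hV : Measurable V) (hW : Measurable W) {p : β → Ω → ℝ}
    (hp : ∀ b, p b =ᵐ[P]
      P[fun ω => if W ω = b then (1 : ℝ) else 0 | MeasurableSpace.comap V inferInstance]) :
    ∀ᵐ ω ∂P, ∑ b, p b ω = 1 := by
  have h := condExp_comp_ae_eq_sum_mul hV hW hp (h := fun _ _ => 1)
    (fun _ => measurable_const) (integrable_const 1)
  rw [condExp_const hV.comap_le] at h
  filter_upwards [h] with ω hω
  simpa using hω.symm

end CondExp

noncomputable section Mediation

variable {𝓧 : Type*}

def InBounds (c Cbar ρlo ρhi R : ℝ) (a : Fin 2 → 𝓧 → ℝ) (f : Fin 2 → 𝓧 → Fin 2 → ℝ)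
    (u : 𝓧 → Fin 2 → Fin 2 → ℝ) (x : 𝓧) : Prop :=
  (∀ d, a d x ∈ Set.Ioo c Cbar) ∧ (∀ m d, f m x d ∈ Set.Icc ρlo ρhi) ∧ ∀ d m, |u x d m| ≤ R

variable {a aF : Fin 2 → 𝓧 → ℝ} {f fF : Fin 2 → 𝓧 → Fin 2 → ℝ} {u uF : 𝓧 → Fin 2 → Fin 2 → ℝ}
  {d d' : Fin 2} {x : 𝓧}

def plugIn (f : Fin 2 → 𝓧 → Fin 2 → ℝ) (u : 𝓧 → Fin 2 → Fin 2 → ℝ) (d d' : Fin 2) (x : 𝓧) :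
    ℝ :=
  ∑ m : Fin 2, u x d m * f m x d'

def ipwWeight (aF : Fin 2 → 𝓧 → ℝ) (fF : Fin 2 → 𝓧 → Fin 2 → ℝ) (d d' : Fin 2) (x : 𝓧)
    (d₀ m : Fin 2) : ℝ :=
  (if d₀ = d then (1 : ℝ) else 0) * fF m x d' / (aF d x * fF m x d)

/-- `psiFun` as a function of the observed values `(x, d₀, m, y)` of `(X, D, M, Y)`. -/
def psiKernel (aF : Fin 2 → 𝓧 → ℝ) (fF : Fin 2 → 𝓧 → Fin 2 → ℝ)
    (uF : 𝓧 → Fin 2 → Fin 2 → ℝ) (d d' : Fin 2) (x : 𝓧) (d₀ m : Fin 2) (y : ℝ) : ℝ :=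
  ipwWeight aF fF d d' x d₀ m * (y - uF x d m)
    + (1 - (if d₀ = d' then (1 : ℝ) else 0) / aF d' x) * plugIn fF uF d d' x
    + (if d₀ = d' then (1 : ℝ) else 0) / aF d' x * uF x d m

def outcomeError (f fF : Fin 2 → 𝓧 → Fin 2 → ℝ) (u uF : 𝓧 → Fin 2 → Fin 2 → ℝ) (d d' : Fin 2)
    (x : 𝓧) : ℝ :=
  ∑ m : Fin 2, f m x d * (fF m x d' / fF m x d) * (u x d m - uF x d m)

def mediatorError (f fF : Fin 2 → 𝓧 → Fin 2 → ℝ) (uF : 𝓧 → Fin 2 → Fin 2 → ℝ) (d d' : Fin 2)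
    (x : 𝓧) : ℝ :=
  ∑ m : Fin 2, uF x d m * (f m x d' - fF m x d')

/-- `E[ψ̃ | X = x, D = d₀]`. -/
def psiGivenXD (aF : Fin 2 → 𝓧 → ℝ) (f fF : Fin 2 → 𝓧 → Fin 2 → ℝ)
    (u uF : 𝓧 → Fin 2 → Fin 2 → ℝ) (d d' : Fin 2) (x : 𝓧) (d₀ : Fin 2) : ℝ :=
  (if d₀ = d then (1 : ℝ) else 0) / aF d x * outcomeError f fF u uF d d' x
    + (if d₀ = d' then (1 : ℝ) else 0) / aF d' x * mediatorError f fF uF d d' x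
    + plugIn fF uF d d' x

/-- `E[ψ̃ | X = x]`. -/
def psiGivenX (a aF : Fin 2 → 𝓧 → ℝ) (f fF : Fin 2 → 𝓧 → Fin 2 → ℝ)
    (u uF : 𝓧 → Fin 2 → Fin 2 → ℝ) (d d' : Fin 2) (x : 𝓧) : ℝ :=
  a d x / aF d x * outcomeError f fF u uF d d' x
    + a d' x / aF d' x * mediatorError f fF uF d d' x + plugIn fF uF d d' x

theorem psiKernel_eq_ipwWeight_mul_add (d₀ m : Fin 2) (y : ℝ) :
    psiKernel aF fF uF d d' x d₀ m y
      = ipwWeight aF fF d d' x d₀ m * y + psiKernel aF fF uF d d' x d₀ m 0 := by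
  simp only [psiKernel]
  ring

theorem sum_psiKernel_mul_eq_psiGivenXD (d₀ : Fin 2) (hf : ∑ m, f m x d₀ = 1) :
    ∑ m, psiKernel aF fF uF d d' x d₀ m (u x d₀ m) * f m x d₀
      = psiGivenXD aF f fF u uF d d' x d₀ := by
  simp only [Fin.sum_univ_two] at hf
  simp only [psiGivenXD, psiKernel, ipwWeight, outcomeError, mediatorError, plugIn,
    Fin.sum_univ_two]
  rcases eq_or_ne d₀ d with rfl | hd <;> rcases eq_or_ne d₀ d' with rfl | hd'
  · simp only [if_true]
    linear_combination (1 - 1 / aF d₀ x) * (uF x d₀ 0 * fF 0 x d₀ + uF x d₀ 1 * fF 1 x d₀) * hf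
  · simp only [if_true, if_neg hd']
    linear_combination (uF x d₀ 0 * fF 0 x d' + uF x d₀ 1 * fF 1 x d') * hf
  · simp only [if_true, if_neg hd]
    linear_combination (1 - 1 / aF d₀ x) * (uF x d 0 * fF 0 x d₀ + uF x d 1 * fF 1 x d₀) * hf
  · simp only [if_neg hd, if_neg hd']
    linear_combination (uF x d 0 * fF 0 x d' + uF x d 1 * fF 1 x d') * hf

theorem sum_psiGivenXD_mul_eq_psiGivenX (ha : ∑ d₀, a d₀ x = 1) :
    ∑ d₀, psiGivenXD aF f fF u uF d d' x d₀ * a d₀ x = psiGivenX a aF f fF u uF d d' x := by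
  have hterm : ∀ d₀, psiGivenXD aF f fF u uF d d' x d₀ * a d₀ x
      = (if d₀ = d then a d₀ x else 0) * (outcomeError f fF u uF d d' x / aF d x)
        + (if d₀ = d' then a d₀ x else 0) * (mediatorError f fF uF d d' x / aF d' x)
        + a d₀ x * plugIn fF uF d d' x := fun d₀ => by
    simp only [psiGivenXD]
    split_ifs <;> ring
  simp only [hterm, Finset.sum_add_distrib, ← Finset.sum_mul, Finset.sum_ite_eq', Finset.mem_univ,
    if_true, ha, psiGivenX]
  ring

theorem psiGivenX_eq_plugIn_of_a_f (ha : aF d x = a d x) (ha0 : a d x ≠ 0)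
    (hf : ∀ m d₀, fF m x d₀ = f m x d₀) (hf0 : ∀ m, f m x d ≠ 0) :
    psiGivenX a aF f fF u uF d d' x = plugIn f u d d' x := by
  simp only [psiGivenX, outcomeError, mediatorError, plugIn, ha, hf, div_self ha0, sub_self,
    mul_zero, Finset.sum_const_zero, one_mul, add_zero, Fin.sum_univ_two]
  field_simp [hf0 0, hf0 1]
  ring

theorem psiGivenX_eq_plugIn_of_a_u (ha : aF d' x = a d' x) (ha0 : a d' x ≠ 0)
    (hu : ∀ m, uF x d m = u x d m) :
    psiGivenX a aF f fF u uF d d' x = plugIn f u d d' x := by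
  simp only [psiGivenX, outcomeError, mediatorError, plugIn, ha, hu, div_self ha0, sub_self,
    mul_zero, Finset.sum_const_zero, one_mul, zero_add, Fin.sum_univ_two]
  ring

theorem psiGivenX_eq_plugIn_of_f_u (hf : ∀ m, fF m x d' = f m x d')
    (hu : ∀ m, uF x d m = u x d m) :
    psiGivenX a aF f fF u uF d d' x = plugIn f u d d' x := by
  simp only [psiGivenX, outcomeError, mediatorError, plugIn, hf, hu, sub_self, mul_zero,
    Finset.sum_const_zero, zero_add]

theorem abs_ite_div_le (p : Prop) [Decidable p] {t : ℝ} (hc : 0 < c) (ht : c < t) :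
    |(if p then (1 : ℝ) else 0) / t| ≤ 1 / c := by
  rw [abs_div, abs_of_pos (hc.trans ht)]
  split_ifs <;> simp only [abs_one, abs_zero, zero_div] <;> bound

theorem abs_ipwWeight_le (hc : 0 < c) (hρ : 0 < ρlo)
    (hx : InBounds c Cbar ρlo ρhi R aF fF uF x) (d₀ m : Fin 2) :
    |ipwWeight aF fF d d' x d₀ m| ≤ ρhi / (c * ρlo) := by
  obtain ⟨ha, hf, -⟩ := hx
  have hfpos : ∀ d, 0 < fF m x d := fun d => hρ.trans_le (hf m d).1
  have hind : |(if d₀ = d then (1 : ℝ) else 0)| ≤ 1 := by split_ifs <;> simp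
  rw [ipwWeight, abs_div, abs_mul, abs_mul, abs_of_pos (hc.trans (ha d).1), abs_of_pos (hfpos d),
    abs_of_pos (hfpos d'), ← one_mul ρhi]
  exact div_le_div₀ (by linarith [(hfpos d').le.trans (hf m d').2])
    (mul_le_mul hind (hf m d').2 (hfpos d').le zero_le_one) (mul_pos hc hρ)
    (mul_le_mul (ha d).1.le (hf m d).1 hρ.le (hc.trans (ha d).1).le)

theorem abs_plugIn_le (hρ : 0 < ρlo) (hx : InBounds c Cbar ρlo ρhi R aF fF uF x) :
    |plugIn fF uF d d' x| ≤ 2 * (R * ρhi) := by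
  obtain ⟨-, hf, hu⟩ := hx
  have hterm : ∀ m, |uF x d m * fF m x d'| ≤ R * ρhi := fun m => by
    rw [abs_mul, abs_of_pos (hρ.trans_le (hf m d').1)]
    exact mul_le_mul (hu d m) (hf m d').2 (hρ.trans_le (hf m d').1).le
      ((abs_nonneg _).trans (hu d m))
  calc _ ≤ |uF x d 0 * fF 0 x d'| + |uF x d 1 * fF 1 x d'| := by
        rw [plugIn, Fin.sum_univ_two]; exact abs_add_le _ _
    _ ≤ 2 * (R * ρhi) := by linarith [hterm 0, hterm 1]

theorem abs_psiKernel_zero_le (hc : 0 < c) (hρ : 0 < ρlo)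
    (hx : InBounds c Cbar ρlo ρhi R aF fF uF x) (d₀ m : Fin 2) :
    |psiKernel aF fF uF d d' x d₀ m 0|
      ≤ ρhi / (c * ρlo) * R + (1 + 1 / c) * (2 * (R * ρhi)) + 1 / c * R := by
  have hi := abs_ite_div_le (d₀ = d') hc (hx.1 d').1
  have hu := hx.2.2 d m
  calc _ ≤ |ipwWeight aF fF d d' x d₀ m * (0 - uF x d m)|
        + |(1 - (if d₀ = d' then (1 : ℝ) else 0) / aF d' x) * plugIn fF uF d d' x|
        + |(if d₀ = d' then (1 : ℝ) else 0) / aF d' x * uF x d m| := abs_add_three _ _ _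
    _ ≤ _ := by
      have hρhi : 0 ≤ ρhi := hρ.le.trans ((hx.2.1 0 0).1.trans (hx.2.1 0 0).2)
      rw [abs_mul, abs_mul, abs_mul, zero_sub, abs_neg]
      gcongr
      · exact abs_ipwWeight_le hc hρ hx d₀ m
      · exact (abs_sub _ _).trans (by rw [abs_one]; linarith)
      · exact abs_plugIn_le hρ hx

end Mediation

theorem Nuisance.ae_inBounds {P : Measure Ω} {X : Ω → 𝓧} (hX : AEMeasurable X P)
    (nu : Nuisance 𝓧 (P.map X) c Cbar ρlo ρhi R) :
    ∀ᵐ ω ∂P, InBounds c Cbar ρlo ρhi R nu.a nu.f nu.u (X ω) :=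
  ae_of_ae_map hX <| by
    filter_upwards [ae_all_iff.2 nu.ha_bdd, ae_all_iff.2 fun m => ae_all_iff.2 (nu.hf_bdd m),
      ae_all_iff.2 fun d => ae_all_iff.2 (nu.hu_bdd d)] with x ha hf hu using ⟨ha, hf, hu⟩

namespace MediationModel

variable (Mdl : MediationModel Ω 𝓧 c Cbar ρlo ρhi R) {aF : Fin 2 → 𝓧 → ℝ}
  {fF : Fin 2 → 𝓧 → Fin 2 → ℝ} {uF : 𝓧 → Fin 2 → Fin 2 → ℝ}

theorem ae_inBounds : ∀ᵐ ω ∂Mdl.P, InBounds c Cbar ρlo ρhi R Mdl.a Mdl.f Mdl.u (Mdl.X ω) := by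
  filter_upwards [ae_all_iff.2 Mdl.ha_bdd, ae_all_iff.2 fun m => ae_all_iff.2 (Mdl.hf_bdd m),
    ae_all_iff.2 fun d => ae_all_iff.2 (Mdl.hu_bdd d)] with ω ha hf hu using ⟨ha, hf, hu⟩

theorem condExp_psiFun_ae_eq (haF : ∀ d, Measurable (aF d))
    (hfF : ∀ m d, Measurable fun x => fF m x d) (huF : ∀ d m, Measurable fun x => uF x d m)
    (hbdd : ∀ᵐ ω ∂Mdl.P, InBounds c Cbar ρlo ρhi R aF fF uF (Mdl.X ω)) (d d' : Fin 2) :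
    Mdl.P[psiFun Mdl.X Mdl.D Mdl.M Mdl.Y aF fF uF d d' |
      MeasurableSpace.comap (fun ω => (Mdl.X ω, Mdl.D ω, Mdl.M ω)) inferInstance]
      =ᵐ[Mdl.P] fun ω => psiKernel aF fF uF d d' (Mdl.X ω) (Mdl.D ω) (Mdl.M ω)
        (Mdl.u (Mdl.X ω) (Mdl.D ω) (Mdl.M ω)) := by
  have := Mdl.isProb
  set V : Ω → 𝓧 × Fin 2 × Fin 2 := fun ω => (Mdl.X ω, Mdl.D ω, Mdl.M ω)
  have hV : Measurable V := Mdl.hX.prodMk (Mdl.hD.prodMk Mdl.hM)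
  set G : Ω → ℝ := fun ω => ipwWeight aF fF d d' (Mdl.X ω) (Mdl.D ω) (Mdl.M ω)
  set K : Ω → ℝ := fun ω => psiKernel aF fF uF d d' (Mdl.X ω) (Mdl.D ω) (Mdl.M ω) 0
  have hG : StronglyMeasurable[MeasurableSpace.comap V inferInstance] G := by
    refine (Measurable.comp
      (g := fun p : 𝓧 × Fin 2 × Fin 2 => ipwWeight aF fF d d' p.1 p.2.1 p.2.2)
      ?_ (comap_measurable V)).stronglyMeasurable
    refine measurable_from_prod_countable_left fun p => ?_
    simp only [ipwWeight]
    split_ifs <;> fun_prop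
  have hK : StronglyMeasurable[MeasurableSpace.comap V inferInstance] K := by
    refine (Measurable.comp
      (g := fun p : 𝓧 × Fin 2 × Fin 2 => psiKernel aF fF uF d d' p.1 p.2.1 p.2.2 0)
      ?_ (comap_measurable V)).stronglyMeasurable
    refine measurable_from_prod_countable_left fun p => ?_
    simp only [psiKernel, ipwWeight, plugIn]
    split_ifs <;> fun_prop
  have hGY : Integrable (fun ω => G ω * Mdl.Y ω) Mdl.P :=
    Mdl.hY.bdd_mul (hG.mono hV.comap_le).aestronglyMeasurable
      (by filter_upwards [hbdd] with ω hω using abs_ipwWeight_le Mdl.hc Mdl.hρ1 hω _ _)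
  have hKint : Integrable K Mdl.P :=
    Integrable.of_bound (hK.mono hV.comap_le).aestronglyMeasurable _
      (by filter_upwards [hbdd] with ω hω using abs_psiKernel_zero_le Mdl.hc Mdl.hρ1 hω _ _)
  have hsplit : psiFun Mdl.X Mdl.D Mdl.M Mdl.Y aF fF uF d d'
      = (fun ω => G ω * Mdl.Y ω) + K := by
    ext ω
    exact psiKernel_eq_ipwWeight_mul_add _ _ _
  rw [hsplit]
  filter_upwards [condExp_add hGY hKint (MeasurableSpace.comap V inferInstance),
    condExp_mul_ae_eq_of_stronglyMeasurable_left hG hGY Mdl.hY Mdl.hu_eq]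
    with ω hsum hpull
  rw [hsum, Pi.add_apply, hpull, condExp_of_stronglyMeasurable hV.comap_le hK hKint,
    psiKernel_eq_ipwWeight_mul_add _ _ (Mdl.u _ _ _)]

theorem integral_psiFun_eq_integral_psiGivenX (haF : ∀ d, Measurable (aF d))
    (hfF : ∀ m d, Measurable fun x => fF m x d) (huF : ∀ d m, Measurable fun x => uF x d m)
    (hbdd : ∀ᵐ ω ∂Mdl.P, InBounds c Cbar ρlo ρhi R aF fF uF (Mdl.X ω)) (d d' : Fin 2) :
    ∫ ω, psiFun Mdl.X Mdl.D Mdl.M Mdl.Y aF fF uF d d' ω ∂Mdl.P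
      = ∫ ω, psiGivenX Mdl.a aF Mdl.f fF Mdl.u uF d d' (Mdl.X ω) ∂Mdl.P := by
  have := Mdl.isProb
  have hXD : Measurable fun ω => (Mdl.X ω, Mdl.D ω) := Mdl.hX.prodMk Mdl.hD
  have hXDM : Measurable fun ω => (Mdl.X ω, Mdl.D ω, Mdl.M ω) :=
    Mdl.hX.prodMk (Mdl.hD.prodMk Mdl.hM)
  have hf_meas := Mdl.hf_meas
  have hu_meas := Mdl.hu_meas
  have h1 := Mdl.condExp_psiFun_ae_eq haF hfF huF hbdd d d'
  have h2 := condExp_comp_ae_eq_sum_mul hXD Mdl.hM Mdl.hf_eq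
    (h := fun p m => psiKernel aF fF uF d d' p.1 p.2 m (Mdl.u p.1 p.2 m))
    (fun m => measurable_from_prod_countable_left fun d₀ => by
      simp only [psiKernel, ipwWeight, plugIn]
      split_ifs <;> fun_prop)
    (integrable_condExp.congr h1)
  have e2 : (fun ω => ∑ m, psiKernel aF fF uF d d' (Mdl.X ω) (Mdl.D ω) m
      (Mdl.u (Mdl.X ω) (Mdl.D ω) m) * Mdl.f m (Mdl.X ω) (Mdl.D ω))
      =ᵐ[Mdl.P] fun ω => psiGivenXD aF Mdl.f fF Mdl.u uF d d' (Mdl.X ω) (Mdl.D ω) := by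
    filter_upwards [ae_sum_eq_one_of_condExp hXD Mdl.hM Mdl.hf_eq] with ω hω
    exact sum_psiKernel_mul_eq_psiGivenXD _ hω
  have h3 := condExp_comp_ae_eq_sum_mul Mdl.hX Mdl.hD Mdl.ha_eq
    (h := psiGivenXD aF Mdl.f fF Mdl.u uF d d')
    (fun d₀ => by
      simp only [psiGivenXD, outcomeError, mediatorError, plugIn]
      split_ifs <;> fun_prop)
    (integrable_condExp.congr (h2.trans e2))
  have e3 : (fun ω =>
      ∑ d₀, psiGivenXD aF Mdl.f fF Mdl.u uF d d' (Mdl.X ω) d₀ * Mdl.a d₀ (Mdl.X ω))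
      =ᵐ[Mdl.P] fun ω => psiGivenX Mdl.a aF Mdl.f fF Mdl.u uF d d' (Mdl.X ω) := by
    filter_upwards [ae_sum_eq_one_of_condExp Mdl.hX Mdl.hD Mdl.ha_eq] with ω hω
    exact sum_psiGivenXD_mul_eq_psiGivenX hω
  calc _ = _ := integral_eq_of_condExp_ae_eq hXDM.comap_le h1
    _ = _ := integral_eq_of_condExp_ae_eq hXD.comap_le (h2.trans e2)
    _ = _ := integral_eq_of_condExp_ae_eq Mdl.hX.comap_le (h3.trans e3)

end MediationModel

/-- multiple robustness: if at least two of the three equalities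
`ã = a`, `f̃ = f`, `μ̃ = μ` hold (for all `d, m` and almost every `x`), then the
one-step estimator is unbiased: `E[ψ̃_{d,d'}(O)] = φ(d,d')`; in particular this
holds with the true nuisance functions. -/
theorem multiply_robust
    (Mdl : MediationModel Ω 𝓧 c Cbar ρlo ρhi R)
    (nu : Nuisance 𝓧 (Measure.map Mdl.X Mdl.P) c Cbar ρlo ρhi R) :
    (let aEq : Prop := ∀ d : Fin 2, ∀ᵐ x ∂(Measure.map Mdl.X Mdl.P), nu.a d x = Mdl.a d x
     let fEq : Prop := ∀ m d : Fin 2, ∀ᵐ x ∂(Measure.map Mdl.X Mdl.P), nu.f m x d = Mdl.f m x d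
     let uEq : Prop := ∀ d m : Fin 2, ∀ᵐ x ∂(Measure.map Mdl.X Mdl.P), nu.u x d m = Mdl.u x d m
     ((aEq ∧ fEq) ∨ (aEq ∧ uEq) ∨ (fEq ∧ uEq)) →
       ∀ d d' : Fin 2, (∫ ω, Mdl.psiT nu d d' ω ∂Mdl.P) = Mdl.phi d d')
    ∧ ∀ d d' : Fin 2, (∫ ω, Mdl.psi d d' ω ∂Mdl.P) = Mdl.phi d d' := by
  have hX : AEMeasurable Mdl.X Mdl.P := Mdl.hX.aemeasurable
  have hne : ∀ᵐ ω ∂Mdl.P, (∀ d, Mdl.a d (Mdl.X ω) ≠ 0) ∧ ∀ m d, Mdl.f m (Mdl.X ω) d ≠ 0 := by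
    filter_upwards [Mdl.ae_inBounds] with ω hω
    exact ⟨fun d => (Mdl.hc.trans (hω.1 d).1).ne',
      fun m d => (Mdl.hρ1.trans_le (hω.2.1 m d).1).ne'⟩
  refine ⟨fun hcase d d' => ?_, fun d d' => ?_⟩
  · refine (Mdl.integral_psiFun_eq_integral_psiGivenX nu.ha_meas nu.hf_meas nu.hu_meas
      (nu.ae_inBounds hX) d d').trans (integral_congr_ae ?_)
    rcases hcase with ⟨hA, hF⟩ | ⟨hA, hU⟩ | ⟨hF, hU⟩
    · filter_upwards [hne, ae_of_ae_map hX (ae_all_iff.2 hA),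
        ae_of_ae_map hX (ae_all_iff.2 fun m => ae_all_iff.2 (hF m))] with ω hω ha hf
      exact psiGivenX_eq_plugIn_of_a_f (ha d) (hω.1 d) hf (fun m => hω.2 m d)
    · filter_upwards [hne, ae_of_ae_map hX (ae_all_iff.2 hA),
        ae_of_ae_map hX (ae_all_iff.2 (hU d))] with ω hω ha hu
      exact psiGivenX_eq_plugIn_of_a_u (ha d') (hω.1 d') hu
    · filter_upwards [ae_of_ae_map hX (ae_all_iff.2 fun m => hF m d'),
        ae_of_ae_map hX (ae_all_iff.2 (hU d))] with ω hf hu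
      exact psiGivenX_eq_plugIn_of_f_u hf hu
  · refine (Mdl.integral_psiFun_eq_integral_psiGivenX Mdl.ha_meas Mdl.hf_meas Mdl.hu_meas
      Mdl.ae_inBounds d d').trans (integral_congr_ae ?_)
    filter_upwards [hne] with ω hω
    exact psiGivenX_eq_plugIn_of_a_f rfl (hω.1 d) (fun _ _ => rfl) (fun m => hω.2 m d)
end

section
/- Inverse-probability-weighting representation of the mediation functional: in the observed-data mediation model with binary treatment and binary mediator, for all d, d' ∈ {0,1}, E[ 1{D = d}·(f(M|X,d') / (a(d|X)·f(M|X,d)))·Y ] = φ(d,d'). -/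
open MeasureTheory ProbabilityTheory
open scoped ENNReal

variable {Ω 𝓧 : Type*} [MeasurableSpace Ω] [MeasurableSpace 𝓧]
  {c Cbar ρlo ρhi R : ℝ}

/-!
Condition successively on `(X, D, M)`, on `(X, D)` and on `X`. Given `(X, D, M)` the outcome `Y`
may be replaced by its regression `μ(X, d, M)`, because the weight is a bounded function of
`(X, D, M)`; given `(X, D)` the mediator is integrated out against `f(·|X, D)`, which on
`{D = d}` cancels the denominator `f(M|X, d)` of the weight; given `X` the treatment indicator
is integrated out against `a(d|X)`, which cancels the propensity.
-/

lemma abs_ite_one_zero_mul_le {p : Prop} [Decidable p] {x C : ℝ} (h : |x| ≤ C) :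
    |(if p then (1 : ℝ) else 0) * x| ≤ C := by
  split_ifs
  · simpa using h
  · simpa using (abs_nonneg x).trans h

section CondExp

variable {β ι : Type*} [MeasurableSpace β] [MeasurableSpace ι] [MeasurableSingletonClass ι]
  [DecidableEq ι] {μ : Measure Ω} [IsFiniteMeasure μ]

lemma integrable_ite_eq_one_zero {Z : Ω → ι} (hZ : Measurable Z) (z : ι) :
    Integrable (fun ω => if Z ω = z then (1 : ℝ) else 0) μ := by
  refine Integrable.of_bound (Measurable.ite (hZ (measurableSet_singleton z)) measurable_const
    measurable_const).aestronglyMeasurable 1 (ae_of_all _ fun ω => ?_)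
  split_ifs <;> simp

lemma integral_comp_mul_eq_of_condExp_comap {V : Ω → β} (hV : Measurable V) {G : β → ℝ}
    (hG : Measurable G) {C : ℝ} (hGC : ∀ᵐ ω ∂μ, |G (V ω)| ≤ C) {f h : Ω → ℝ}
    (hf : Integrable f μ) (hh : h =ᵐ[μ] μ[f | MeasurableSpace.comap V inferInstance]) :
    ∫ ω, G (V ω) * f ω ∂μ = ∫ ω, G (V ω) * h ω ∂μ := by
  have hm : MeasurableSpace.comap V inferInstance ≤ ‹MeasurableSpace Ω› := hV.comap_le
  have hGV : StronglyMeasurable[MeasurableSpace.comap V inferInstance] fun ω => G (V ω) :=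
    (hG.comp (comap_measurable V)).stronglyMeasurable
  have hGC' : ∀ᵐ ω ∂μ, ‖G (V ω)‖ ≤ C := by simpa only [Real.norm_eq_abs] using hGC
  calc ∫ ω, G (V ω) * f ω ∂μ
      = ∫ ω, (μ[(fun ω => G (V ω)) * f | MeasurableSpace.comap V inferInstance]) ω ∂μ :=
        (integral_condExp hm).symm
    _ = ∫ ω, G (V ω) * h ω ∂μ := integral_congr_ae <|
        (condExp_stronglyMeasurable_mul_of_bound hm hGV hf C hGC').trans <|
          hh.mono fun ω hω => by simp only [Pi.mul_apply, hω]

/-- Integrating out a finitely-valued `Z` against its conditional law `p(·|V)`. -/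
lemma integral_comp_eq_integral_sum_mul_of_condExp_comap [Fintype ι] {V : Ω → β}
    {Z : Ω → ι} (hV : Measurable V) (hZ : Measurable Z) {p : ι → Ω → ℝ}
    (hp : ∀ z, p z =ᵐ[μ]
      μ[fun ω => if Z ω = z then (1 : ℝ) else 0 | MeasurableSpace.comap V inferInstance])
    {H : β → ι → ℝ} (hH : ∀ z, Measurable fun b => H b z) {C : ℝ}
    (hHC : ∀ z, ∀ᵐ ω ∂μ, |H (V ω) z| ≤ C) :
    ∫ ω, H (V ω) (Z ω) ∂μ = ∫ ω, ∑ z, H (V ω) z * p z ω ∂μ := by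
  have hbound : ∀ z, ∀ᵐ ω ∂μ, ‖H (V ω) z‖ ≤ C := fun z => by
    simpa only [Real.norm_eq_abs] using hHC z
  have hHV : ∀ z, AEStronglyMeasurable (fun ω => H (V ω) z) μ := fun z =>
    ((hH z).comp hV).aestronglyMeasurable
  calc ∫ ω, H (V ω) (Z ω) ∂μ
      = ∫ ω, ∑ z, H (V ω) z * (if Z ω = z then (1 : ℝ) else 0) ∂μ := by
        simp only [mul_ite, mul_one, mul_zero, Finset.sum_ite_eq, Finset.mem_univ, if_true]
    _ = ∑ z, ∫ ω, H (V ω) z * (if Z ω = z then (1 : ℝ) else 0) ∂μ :=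
        integral_finsetSum _ fun z _ =>
          (integrable_ite_eq_one_zero hZ z).bdd_mul (hHV z) (hbound z)
    _ = ∑ z, ∫ ω, H (V ω) z * p z ω ∂μ :=
        Finset.sum_congr rfl fun z _ =>
          integral_comp_mul_eq_of_condExp_comap hV (hH z) (hHC z)
            (integrable_ite_eq_one_zero hZ z) (hp z)
    _ = ∫ ω, ∑ z, H (V ω) z * p z ω ∂μ :=
        (integral_finsetSum _ fun z _ =>
          (integrable_condExp.congr (hp z).symm).bdd_mul (hHV z) (hbound z)).symm

end CondExp

namespace MediationModel

variable (Mdl : MediationModel Ω 𝓧 c Cbar ρlo ρhi R) (d d' : Fin 2)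

instance inst_s3 : IsProbabilityMeasure Mdl.P := Mdl.isProb

noncomputable def weight (x : 𝓧) (m : Fin 2) : ℝ := Mdl.f m x d' / (Mdl.a d x * Mdl.f m x d)

lemma measurable_weight (m : Fin 2) : Measurable fun x => Mdl.weight d d' x m :=
  (Mdl.hf_meas m d').div ((Mdl.ha_meas d).mul (Mdl.hf_meas m d))

lemma ae_abs_weight_le :
    ∀ᵐ ω ∂Mdl.P, ∀ m, |Mdl.weight d d' (Mdl.X ω) m| ≤ ρhi / (c * ρlo) := by
  filter_upwards [Mdl.ha_bdd d, ae_all_iff.2 fun m => Mdl.hf_bdd m d,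
    ae_all_iff.2 fun m => Mdl.hf_bdd m d'] with ω ha hf hf' m
  have hden : c * ρlo ≤ Mdl.a d (Mdl.X ω) * Mdl.f m (Mdl.X ω) d :=
    mul_le_mul ha.1.le (hf m).1 Mdl.hρ1.le (Mdl.hc.trans ha.1).le
  have hnum : 0 ≤ Mdl.f m (Mdl.X ω) d' := Mdl.hρ1.le.trans (hf' m).1
  rw [weight, abs_of_nonneg (div_nonneg hnum ((mul_pos Mdl.hc Mdl.hρ1).le.trans hden))]
  exact div_le_div₀ (Mdl.hρ1.le.trans Mdl.hρ2) (hf' m).2 (mul_pos Mdl.hc Mdl.hρ1) hden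

lemma ae_weight_mul_f :
    ∀ᵐ ω ∂Mdl.P, ∀ m, Mdl.weight d d' (Mdl.X ω) m * Mdl.f m (Mdl.X ω) d
      = Mdl.f m (Mdl.X ω) d' / Mdl.a d (Mdl.X ω) := by
  filter_upwards [Mdl.ha_bdd d, ae_all_iff.2 fun m => Mdl.hf_bdd m d] with ω ha hf m
  have hf0 : Mdl.f m (Mdl.X ω) d ≠ 0 := (Mdl.hρ1.trans_le (hf m).1).ne'
  have ha0 : Mdl.a d (Mdl.X ω) ≠ 0 := (Mdl.hc.trans ha.1).ne'
  rw [weight]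
  field_simp

lemma ae_abs_sum_u_mul_f_div_a_le :
    ∀ᵐ ω ∂Mdl.P,
      |(∑ m, Mdl.u (Mdl.X ω) d m * Mdl.f m (Mdl.X ω) d') / Mdl.a d (Mdl.X ω)|
        ≤ 2 * R / c := by
  filter_upwards [Mdl.ha_bdd d, ae_all_iff.2 fun m => Mdl.hf_bdd m d',
    ae_all_iff.2 (Mdl.hu_bdd d)] with ω ha hf hu
  have hterm : ∀ m, |Mdl.u (Mdl.X ω) d m * Mdl.f m (Mdl.X ω) d'| ≤ R := fun m => by
    rw [abs_mul, abs_of_pos (Mdl.hρ1.trans_le (hf m).1)]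
    exact (mul_le_of_le_one_right (abs_nonneg _) ((hf m).2.trans_lt Mdl.hρ3).le).trans (hu m)
  have hsum : |∑ m, Mdl.u (Mdl.X ω) d m * Mdl.f m (Mdl.X ω) d'| ≤ 2 * R := by
    rw [Fin.sum_univ_two, two_mul]
    exact (abs_add_le _ _).trans (add_le_add (hterm 0) (hterm 1))
  rw [abs_div, abs_of_pos (Mdl.hc.trans ha.1)]
  exact div_le_div₀ (mul_pos two_pos Mdl.hR).le hsum Mdl.hc ha.1.le

lemma integral_ipw_eq_integral_regression :
    ∫ ω, (if Mdl.D ω = d then (1 : ℝ) else 0) * Mdl.weight d d' (Mdl.X ω) (Mdl.M ω)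
        * Mdl.Y ω ∂Mdl.P = ∫ ω, (if Mdl.D ω = d then (1 : ℝ) else 0)
          * (Mdl.weight d d' (Mdl.X ω) (Mdl.M ω) * Mdl.u (Mdl.X ω) d (Mdl.M ω)) ∂Mdl.P := by
  have hG : Measurable fun v : 𝓧 × Fin 2 × Fin 2 =>
      (if v.2.1 = d then (1 : ℝ) else 0) * Mdl.weight d d' v.1 v.2.2 :=
    measurable_from_prod_countable_left fun y =>
      (Mdl.measurable_weight d d' y.2).const_mul (if y.1 = d then 1 else 0)
  have hGC : ∀ᵐ ω ∂Mdl.P,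
      |(if Mdl.D ω = d then (1 : ℝ) else 0) * Mdl.weight d d' (Mdl.X ω) (Mdl.M ω)|
        ≤ ρhi / (c * ρlo) := by
    filter_upwards [Mdl.ae_abs_weight_le d d'] with ω hw
    exact abs_ite_one_zero_mul_le (hw _)
  rw [integral_comp_mul_eq_of_condExp_comap (Mdl.hX.prodMk (Mdl.hD.prodMk Mdl.hM)) hG hGC
    Mdl.hY Mdl.hu_eq]
  refine integral_congr_ae (ae_of_all _ fun ω => ?_)
  by_cases hD : Mdl.D ω = d
  · simp only [hD, if_true, one_mul]
  · simp only [hD, if_false, zero_mul]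

lemma integral_regression_eq_integral_div_propensity :
    ∫ ω, (if Mdl.D ω = d then (1 : ℝ) else 0)
        * (Mdl.weight d d' (Mdl.X ω) (Mdl.M ω) * Mdl.u (Mdl.X ω) d (Mdl.M ω)) ∂Mdl.P
      = ∫ ω, (∑ m, Mdl.u (Mdl.X ω) d m * Mdl.f m (Mdl.X ω) d') / Mdl.a d (Mdl.X ω)
          * (if Mdl.D ω = d then (1 : ℝ) else 0) ∂Mdl.P := by
  have hH : ∀ m, Measurable fun v : 𝓧 × Fin 2 =>
      (if v.2 = d then (1 : ℝ) else 0) * (Mdl.weight d d' v.1 m * Mdl.u v.1 d m) := fun m =>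
    measurable_from_prod_countable_left fun δ =>
      ((Mdl.measurable_weight d d' m).mul (Mdl.hu_meas d m)).const_mul (if δ = d then 1 else 0)
  have hHC : ∀ m, ∀ᵐ ω ∂Mdl.P,
      |(if Mdl.D ω = d then (1 : ℝ) else 0)
        * (Mdl.weight d d' (Mdl.X ω) m * Mdl.u (Mdl.X ω) d m)| ≤ ρhi / (c * ρlo) * R :=
      fun m => by
    filter_upwards [Mdl.ae_abs_weight_le d d', Mdl.hu_bdd d m] with ω hw hu
    refine abs_ite_one_zero_mul_le ?_
    rw [abs_mul]
    exact mul_le_mul (hw m) hu (abs_nonneg _) ((abs_nonneg _).trans (hw m))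
  rw [integral_comp_eq_integral_sum_mul_of_condExp_comap (Mdl.hX.prodMk Mdl.hD) Mdl.hM
    (p := fun m ω => Mdl.f m (Mdl.X ω) (Mdl.D ω)) Mdl.hf_eq hH hHC]
  refine integral_congr_ae ?_
  filter_upwards [Mdl.ae_weight_mul_f d d'] with ω hwf
  by_cases hD : Mdl.D ω = d
  · simp only [hD, if_true, one_mul, mul_one, Finset.sum_div]
    refine Finset.sum_congr rfl fun m _ => ?_
    rw [mul_right_comm, hwf m]
    ring
  · simp only [hD, if_false, zero_mul, mul_zero, Finset.sum_const_zero]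

lemma integral_div_propensity_eq_phi :
    ∫ ω, (∑ m, Mdl.u (Mdl.X ω) d m * Mdl.f m (Mdl.X ω) d') / Mdl.a d (Mdl.X ω)
        * (if Mdl.D ω = d then (1 : ℝ) else 0) ∂Mdl.P = Mdl.phi d d' := by
  have hr : Measurable fun x => (∑ m, Mdl.u x d m * Mdl.f m x d') / Mdl.a d x :=
    (Finset.measurable_sum _ fun m _ => (Mdl.hu_meas d m).mul (Mdl.hf_meas m d')).div
      (Mdl.ha_meas d)
  rw [integral_comp_mul_eq_of_condExp_comap Mdl.hX hr (Mdl.ae_abs_sum_u_mul_f_div_a_le d d')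
    (integrable_ite_eq_one_zero Mdl.hD d) (Mdl.ha_eq d)]
  refine integral_congr_ae ?_
  filter_upwards [Mdl.ha_bdd d] with ω ha
  exact div_mul_cancel₀ _ (Mdl.hc.trans ha.1).ne'

end MediationModel

/-- inverse-probability-weighting representation: for all `d, d'`,
`E[ 1{D = d} · f(M|X,d') / (a(d|X) f(M|X,d)) · Y ] = φ(d,d')`. -/
theorem ipw_representation
    (Mdl : MediationModel Ω 𝓧 c Cbar ρlo ρhi R) (d d' : Fin 2) :
    (∫ ω, (if Mdl.D ω = d then (1 : ℝ) else 0)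
        * (Mdl.f (Mdl.M ω) (Mdl.X ω) d' / (Mdl.a d (Mdl.X ω) * Mdl.f (Mdl.M ω) (Mdl.X ω) d))
        * Mdl.Y ω ∂Mdl.P) = Mdl.phi d d' :=
  calc _ = ∫ ω, (if Mdl.D ω = d then (1 : ℝ) else 0)
          * (Mdl.weight d d' (Mdl.X ω) (Mdl.M ω) * Mdl.u (Mdl.X ω) d (Mdl.M ω)) ∂Mdl.P :=
        Mdl.integral_ipw_eq_integral_regression d d'
    _ = ∫ ω, (∑ m, Mdl.u (Mdl.X ω) d m * Mdl.f m (Mdl.X ω) d') / Mdl.a d (Mdl.X ω)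
          * (if Mdl.D ω = d then (1 : ℝ) else 0) ∂Mdl.P :=
        Mdl.integral_regression_eq_integral_div_propensity d d'
    _ = Mdl.phi d d' := Mdl.integral_div_propensity_eq_phi d d'
end

section
/- Mixed representation of the mediation functional: in the observed-data mediation model with binary treatment and binary mediator, for all d, d' ∈ {0,1}, E[ (1{D = d'} / a(d'|X))·μ(X,d,M) ] = φ(d,d'). -/
open MeasureTheory ProbabilityTheory
open scoped ENNReal

variable {Ω 𝓧 : Type*} [MeasurableSpace Ω] [MeasurableSpace 𝓧]
  {c Cbar ρlo ρhi R : ℝ}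

/-! Write `μ(X,d,M) = Σ_m μ(X,d,m) 1{M = m}`. Conditioning on `(X, D)` turns `1{M = m}` into
`f(m|X,D)`, which is `f(m|X,d')` on the event `D = d'`; conditioning on `X` then turns
`1{D = d'}` into `a(d'|X)`, which cancels the inverse-propensity weight. -/

attribute [instance] MediationModel.isProb

section TotalExpectation

variable {α ι : Type*} {m mα : MeasurableSpace α} {μ : Measure α} [IsFiniteMeasure μ]
  [Fintype ι] [DecidableEq ι] [MeasurableSpace ι] [MeasurableSingletonClass ι]

theorem integral_apply_eq_integral_sum_mul_condExp_ite (hm : m ≤ mα) {Z : α → ι}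
    (hZ : Measurable Z) {K p : ι → α → ℝ} (hK : ∀ i, StronglyMeasurable[m] (K i))
    (hK_int : ∀ i, Integrable (K i) μ)
    (hp : ∀ i, p i =ᵐ[μ] μ[fun ω => if Z ω = i then (1 : ℝ) else 0 | m]) :
    ∫ ω, K (Z ω) ω ∂μ = ∫ ω, ∑ i, K i ω * p i ω ∂μ := by
  set ind : ι → α → ℝ := fun i ω => if Z ω = i then 1 else 0
  have hind : ∀ i, Measurable (ind i) := fun i =>
    Measurable.ite (hZ (measurableSet_singleton i)) measurable_const measurable_const
  have hind_le : ∀ i, ∀ᵐ ω ∂μ, ‖ind i ω‖ ≤ 1 := fun i =>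
    ae_of_all _ fun ω => by by_cases h : Z ω = i <;> simp [ind, h]
  have hind_int : ∀ i, Integrable (ind i) μ := fun i =>
    .of_bound (hind i).aestronglyMeasurable 1 (hind_le i)
  have hKind : ∀ i, Integrable (K i * ind i) μ := fun i =>
    (hK_int i).mul_bdd (hind i).aestronglyMeasurable (hind_le i)
  have hpull : ∀ i, K i * p i =ᵐ[μ] μ[K i * ind i | m] := fun i =>
    (hp i).mul_left.trans
      (condExp_mul_of_stronglyMeasurable_left (hK i) (hKind i) (hind_int i)).symm
  calc ∫ ω, K (Z ω) ω ∂μ = ∫ ω, ∑ i, (K i * ind i) ω ∂μ := by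
        congr 1 with ω
        simp [ind]
    _ = ∑ i, ∫ ω, μ[K i * ind i | m] ω ∂μ := by
        rw [integral_finsetSum _ fun i _ => hKind i]
        simp_rw [integral_condExp hm]
    _ = ∑ i, ∫ ω, (K i * p i) ω ∂μ :=
        Finset.sum_congr rfl fun i _ => (integral_congr_ae (hpull i)).symm
    _ = ∫ ω, ∑ i, K i ω * p i ω ∂μ :=
        (integral_finsetSum _ fun i _ => integrable_condExp.congr (hpull i).symm).symm

end TotalExpectation

namespace MediationModel

variable (Mdl : MediationModel Ω 𝓧 c Cbar ρlo ρhi R)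

theorem integral_eq_integral_sum_mul_f {K : 𝓧 → Fin 2 → Fin 2 → ℝ}
    (hK : ∀ e m, Measurable fun x => K x e m)
    (hK_int : ∀ m, Integrable (fun ω => K (Mdl.X ω) (Mdl.D ω) m) Mdl.P) :
    ∫ ω, K (Mdl.X ω) (Mdl.D ω) (Mdl.M ω) ∂Mdl.P
      = ∫ ω, ∑ m, K (Mdl.X ω) (Mdl.D ω) m * Mdl.f m (Mdl.X ω) (Mdl.D ω) ∂Mdl.P :=
  integral_apply_eq_integral_sum_mul_condExp_ite
    (measurable_iff_comap_le.mp (Mdl.hX.prodMk Mdl.hD)) Mdl.hM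
    (K := fun m ω => K (Mdl.X ω) (Mdl.D ω) m)
    (fun m => ((measurable_from_prod_countable_left (f := fun p : 𝓧 × Fin 2 => K p.1 p.2 m)
      fun e => hK e m).comp (comap_measurable _)).stronglyMeasurable)
    hK_int Mdl.hf_eq

theorem integral_eq_integral_sum_mul_a {K : 𝓧 → Fin 2 → ℝ}
    (hK : ∀ e, Measurable fun x => K x e)
    (hK_int : ∀ e, Integrable (fun ω => K (Mdl.X ω) e) Mdl.P) :
    ∫ ω, K (Mdl.X ω) (Mdl.D ω) ∂Mdl.P
      = ∫ ω, ∑ e, K (Mdl.X ω) e * Mdl.a e (Mdl.X ω) ∂Mdl.P :=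
  integral_apply_eq_integral_sum_mul_condExp_ite (measurable_iff_comap_le.mp Mdl.hX) Mdl.hD
    (fun e => ((hK e).comp (comap_measurable _)).stronglyMeasurable) hK_int Mdl.ha_eq

theorem integrable_u (d m : Fin 2) : Integrable (fun ω => Mdl.u (Mdl.X ω) d m) Mdl.P :=
  .of_bound ((Mdl.hu_meas d m).comp Mdl.hX).aestronglyMeasurable R (Mdl.hu_bdd d m)

theorem ae_norm_f_le (m d : Fin 2) : ∀ᵐ ω ∂Mdl.P, ‖Mdl.f m (Mdl.X ω) d‖ ≤ ρhi := by
  filter_upwards [Mdl.hf_bdd m d] with ω hf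
  exact abs_le.mpr ⟨by linarith [hf.1, Mdl.hρ1, Mdl.hρ2], hf.2⟩

noncomputable def ipw (d' : Fin 2) (x : 𝓧) (e : Fin 2) : ℝ := (if e = d' then 1 else 0) / Mdl.a d' x

theorem measurable_ipw (d' e : Fin 2) : Measurable fun x => Mdl.ipw d' x e :=
  measurable_const.div (Mdl.ha_meas d')

theorem ae_norm_ipw_le (d' : Fin 2) : ∀ᵐ ω ∂Mdl.P, ∀ e, ‖Mdl.ipw d' (Mdl.X ω) e‖ ≤ c⁻¹ := by
  filter_upwards [Mdl.ha_bdd d'] with ω ha e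
  have hpos : 0 < Mdl.a d' (Mdl.X ω) := Mdl.hc.trans ha.1
  unfold ipw
  split_ifs
  · rw [one_div, norm_inv, Real.norm_of_nonneg hpos.le]
    exact inv_anti₀ Mdl.hc ha.1.le
  · simpa using Mdl.hc.le

theorem integrable_ipw_mul_u {T : Ω → Fin 2} (hT : Measurable T) (d' d m : Fin 2) :
    Integrable (fun ω => Mdl.ipw d' (Mdl.X ω) (T ω) * Mdl.u (Mdl.X ω) d m) Mdl.P :=
  (Mdl.integrable_u d m).bdd_mul
    ((measurable_from_prod_countable_left (f := fun p : 𝓧 × Fin 2 => Mdl.ipw d' p.1 p.2)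
      (Mdl.measurable_ipw d')).comp (Mdl.hX.prodMk hT)).aestronglyMeasurable
    ((Mdl.ae_norm_ipw_le d').mono fun _ h => h _)

end MediationModel

/-- mixed representation: for all `d, d'`,
`E[ (1{D = d'} / a(d'|X)) · μ(X,d,M) ] = φ(d,d')`. -/
theorem mixed_representation
    (Mdl : MediationModel Ω 𝓧 c Cbar ρlo ρhi R) (d d' : Fin 2) :
    (∫ ω, (if Mdl.D ω = d' then (1 : ℝ) else 0) / Mdl.a d' (Mdl.X ω)
        * Mdl.u (Mdl.X ω) d (Mdl.M ω) ∂Mdl.P) = Mdl.phi d d' := by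
  have hwuf_int : ∀ e, Integrable
      (fun ω => ∑ m, Mdl.ipw d' (Mdl.X ω) e * Mdl.u (Mdl.X ω) d m * Mdl.f m (Mdl.X ω) e) Mdl.P :=
    fun e => integrable_finsetSum _ fun m _ =>
      (Mdl.integrable_ipw_mul_u measurable_const d' d m).mul_bdd
        ((Mdl.hf_meas m e).comp Mdl.hX).aestronglyMeasurable (Mdl.ae_norm_f_le m e)
  calc _ = ∫ ω, ∑ m, Mdl.ipw d' (Mdl.X ω) (Mdl.D ω) * Mdl.u (Mdl.X ω) d m
          * Mdl.f m (Mdl.X ω) (Mdl.D ω) ∂Mdl.P :=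
        Mdl.integral_eq_integral_sum_mul_f (K := fun x e m => Mdl.ipw d' x e * Mdl.u x d m)
          (fun e m => (Mdl.measurable_ipw d' e).mul (Mdl.hu_meas d m))
          (Mdl.integrable_ipw_mul_u Mdl.hD d' d)
    _ = ∫ ω, ∑ e, (∑ m, Mdl.ipw d' (Mdl.X ω) e * Mdl.u (Mdl.X ω) d m * Mdl.f m (Mdl.X ω) e)
          * Mdl.a e (Mdl.X ω) ∂Mdl.P :=
        Mdl.integral_eq_integral_sum_mul_a
          (fun e => Finset.measurable_sum _ fun m _ =>
            ((Mdl.measurable_ipw d' e).mul (Mdl.hu_meas d m)).mul (Mdl.hf_meas m e)) hwuf_int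
    _ = Mdl.phi d d' := by
        refine integral_congr_ae ?_
        filter_upwards [Mdl.ha_bdd d'] with ω ha
        have hne : Mdl.a d' (Mdl.X ω) ≠ 0 := (Mdl.hc.trans ha.1).ne'
        rw [Finset.sum_eq_single d' (fun e _ he => by simp [MediationModel.ipw, he]) (by simp)]
        simp only [MediationModel.ipw, ↓reduceIte, Finset.sum_mul]
        refine Finset.sum_congr rfl fun m _ => ?_
        field_simp
end

section
/- Metric entropy bound for the non-sparse ReLU network class (Lemma A.2): for every dimension p and every B ≥ 1, there exists a constant c₀ depending only on p and B such that for all L, K ≥ 2 and all ε ∈ (0,1), there exists a finite set G of functions from [0,1]^p to ℝ with cardinality at most exp( c₀ · (L·K)² · log(L·K/ε) ) such that every f ∈ F_nn(L, K, B) satisfies sup_{x ∈ [0,1]^p} |f(x) − g(x)| ≤ ε for some g ∈ G; equivalently, the ε-covering number of F_nn(L, K, B) in the sup-norm on [0,1]^p satisfies log N(ε, F_nn(L, K, B), ‖·‖_∞) ≤ c₀ (L·K)² log(L·K/ε). -/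
open MeasureTheory ProbabilityTheory

/-- The unit cube `[0,1]^p`. -/
def unitCube (p : ℕ) : Set (Fin p → ℝ) := {x | ∀ i, x i ∈ Set.Icc (0 : ℝ) 1}

/-- Forward pass of a ReLU network: layer `l` maps `v ∈ ℝ^{dims l}` to
`i ↦ ∑ j W^{(l)}_{i j} · max(v j − b^{(l)} j, 0)`. -/
noncomputable def reluForward (dims : ℕ → ℕ)
    (W : (l : ℕ) → Matrix (Fin (dims (l + 1))) (Fin (dims l)) ℝ)
    (b : (l : ℕ) → Fin (dims l) → ℝ) : (l : ℕ) → (Fin (dims 0) → ℝ) → Fin (dims l) → ℝ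
  | 0 => fun x => x
  | l + 1 => fun x i => ∑ j, W l i j * max (reluForward dims W b l x j - b l j) 0

/-- Membership in the fully-connected feed-forward ReLU network class
`F_nn(L, K, B)` with input dimension `p`, depth `L`, width `K` and all
parameters bounded by `B` in absolute value. -/
def FnnMem (p L K : ℕ) (B : ℝ) (F : (Fin p → ℝ) → ℝ) : Prop :=
  ∃ (dims : ℕ → ℕ) (hd0 : dims 0 = p),
    dims L = 1 ∧ (∀ l, 1 ≤ l → l < L → dims l = K) ∧
    ∃ (W : (l : ℕ) → Matrix (Fin (dims (l + 1))) (Fin (dims l)) ℝ)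
      (b : (l : ℕ) → Fin (dims l) → ℝ),
      (∀ l, l < L → ∀ i j, |W l i j| ≤ B) ∧
      (∀ l, l < L → ∀ j, |b l j| ≤ B) ∧
      ∀ x : Fin p → ℝ, F x = ∑ i, reluForward dims W b L (fun j => x (Fin.cast hd0 j)) i

/-- Partial derivative in coordinate `i`. -/
noncomputable def cpderiv {k : ℕ} (i : Fin k) (g : (Fin k → ℝ) → ℝ) : (Fin k → ℝ) → ℝ :=
  fun x => fderiv ℝ g x (Pi.single i 1)

/-- Iterated partial derivative along a list of coordinates (a multi-index). -/
noncomputable def mderiv {k : ℕ} (Ls : List (Fin k)) (g : (Fin k → ℝ) → ℝ) :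
    (Fin k → ℝ) → ℝ :=
  Ls.foldr cpderiv g

/-- The Hölder ball `H_k(α; C)` on `[0,1]^k` (the sup metric `dist` is used on
`Fin k → ℝ`). -/
def HolderBall (k : ℕ) (α C : ℝ) (g : (Fin k → ℝ) → ℝ) : Prop :=
  (α < 1 →
    ∀ x ∈ unitCube k, ∀ y ∈ unitCube k, x ≠ y → |g x - g y| ≤ C * dist x y ^ α) ∧
  (1 ≤ α →
    (∀ Ls : List (Fin k), Ls.length < ⌊α⌋₊ →
        ∀ x ∈ unitCube k, DifferentiableAt ℝ (mderiv Ls g) x) ∧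
    (∀ Ls : List (Fin k), Ls.length < ⌊α⌋₊ →
        ∀ x ∈ unitCube k, |mderiv Ls g x| ≤ C) ∧
    (∀ Ls : List (Fin k), Ls.length = ⌊α⌋₊ →
        ∀ x ∈ unitCube k, ∀ y ∈ unitCube k, x ≠ y →
          |mderiv Ls g x - mderiv Ls g y| ≤ C * dist x y ^ (α - (⌊α⌋₊ : ℝ))))

/-- The generalized Hölder class `H_k^†(α; C)` of functions on `[0,1]^p` of the form
`g(w) = h(Γ w)` with `h ∈ H_k(α; C)` and `Γ` an (unknown) `k × p` matrix mapping
`[0,1]^p` into `[0,1]^k`. -/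
def GenHolderBall (p k : ℕ) (α C : ℝ) (g : (Fin p → ℝ) → ℝ) : Prop :=
  ∃ (h : (Fin k → ℝ) → ℝ) (Γ : Matrix (Fin k) (Fin p) ℝ),
    HolderBall k α C h ∧ (∀ x ∈ unitCube p, Γ.mulVec x ∈ unitCube k) ∧
    ∀ x ∈ unitCube p, g x = h (Γ.mulVec x)

/-- `ξ` is mean-zero sub-Gaussian with parameter `σ` under `μ`. -/
def SubGaussian {Ω : Type*} [MeasurableSpace Ω] (μ : Measure Ω) (ξ : Ω → ℝ) (σ : ℝ) :
    Prop :=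
  Integrable ξ μ ∧ (∫ ω, ξ ω ∂μ) = 0 ∧
    ∀ t : ℝ, Integrable (fun ω => Real.exp (t * ξ ω)) μ ∧
      (∫ ω, Real.exp (t * ξ ω) ∂μ) ≤ Real.exp (t ^ 2 * σ ^ 2 / 2)

/-!
Zero-padding every layer to the common width `D = p + K` turns each network of `F_nn(L, K, B)`
into a point of the sup-norm ball of radius `B` in the `L (D² + D)` coordinates of a
constant-width network. On the unit cube the activations of layer `l` are bounded by
`(2DB²)^l`, so by induction over the layers a `δ`-perturbation of the coordinates moves the
output by at most `D δ (4DB²)^L`. Rounding every coordinate down to a multiple of `δ`, with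
`δ = ε / (D (16DB²)^L)` (the rounded coordinates have norm at most `2B`), therefore yields an
`ε`-net of `(2⌈B/δ⌉ + 1)^{L (D² + D)}` functions, and the logarithm of this number is
`O((LK)² log(LK/ε))`.
-/

open scoped Matrix

section ReluLayer

variable {ι : Type*} [Fintype ι]

theorem norm_posPart_sub_posPart_le (u v : ι → ℝ) : ‖u⁺ - v⁺‖ ≤ ‖u - v‖ :=
  pi_norm_le_iff_of_nonneg (norm_nonneg _) |>.2 fun i =>
    show |max (u i) 0 - max (v i) 0| ≤ ‖u - v‖ from
      (abs_max_sub_max_le_abs _ _ _).trans (norm_le_pi_norm (u - v) i)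

theorem norm_posPart_le_norm (v : ι → ℝ) : ‖v⁺‖ ≤ ‖v‖ := by
  simpa using norm_posPart_sub_posPart_le v 0

theorem Matrix.norm_mulVec_le_of_abs_le {m n : ℕ} {M : Matrix (Fin m) (Fin n) ℝ} {B : ℝ}
    (hB : 0 ≤ B) (hM : ∀ i j, |M i j| ≤ B) (v : Fin n → ℝ) : ‖M *ᵥ v‖ ≤ n * B * ‖v‖ := by
  refine pi_norm_le_iff_of_nonneg (by positivity) |>.2 fun i => ?_
  calc ‖(M *ᵥ v) i‖ = ‖∑ j, M i j * v j‖ := rfl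
    _ ≤ ∑ j, ‖M i j * v j‖ := norm_sum_le _ _
    _ ≤ ∑ _j : Fin n, B * ‖v‖ := by
        gcongr with j
        rw [norm_mul, Real.norm_eq_abs]
        exact mul_le_mul (hM i j) (norm_le_pi_norm v j) (norm_nonneg _) hB
    _ = n * B * ‖v‖ := by simp [mul_assoc]

end ReluLayer

theorem reluForward_succ (dims : ℕ → ℕ)
    (W : (l : ℕ) → Matrix (Fin (dims (l + 1))) (Fin (dims l)) ℝ)
    (b : (l : ℕ) → Fin (dims l) → ℝ) (l : ℕ) (x : Fin (dims 0) → ℝ) :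
    reluForward dims W b (l + 1) x = W l *ᵥ (reluForward dims W b l x - b l)⁺ :=
  rfl

section Perturbation

variable {dims : ℕ → ℕ} {W W' : (l : ℕ) → Matrix (Fin (dims (l + 1))) (Fin (dims l)) ℝ}
  {b b' : (l : ℕ) → Fin (dims l) → ℝ} {D : ℕ} {B : ℝ} {x : Fin (dims 0) → ℝ}

theorem norm_reluForward_le (hD : 1 ≤ D) (hB : 1 ≤ B) (hx : ‖x‖ ≤ 1) {l : ℕ}
    (hdims : ∀ m < l, dims m ≤ D) (hW : ∀ m < l, ∀ i j, |W m i j| ≤ B)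
    (hb : ∀ m < l, ‖b m‖ ≤ B) :
    ‖reluForward dims W b l x‖ ≤ (2 * D * B ^ 2) ^ l := by
  induction l with
  | zero => simpa [reluForward] using hx
  | succ l ih =>
    have ih := ih (fun m hm => hdims m (by omega)) (fun m hm => hW m (by omega))
      (fun m hm => hb m (by omega))
    have hD' : (1 : ℝ) ≤ D := by exact_mod_cast hD
    have hC : 1 ≤ (2 * D * B ^ 2 : ℝ) ^ l := one_le_pow₀ (by nlinarith)
    have hdl : (dims l : ℝ) ≤ D := by exact_mod_cast hdims l (by omega)
    calc ‖reluForward dims W b (l + 1) x‖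
        ≤ dims l * B * ‖(reluForward dims W b l x - b l)⁺‖ :=
          Matrix.norm_mulVec_le_of_abs_le (by linarith) (hW l (by omega)) _
      _ ≤ D * B * ((2 * D * B ^ 2) ^ l + B) := by
          gcongr
          exact (norm_posPart_le_norm _).trans
            ((norm_sub_le _ _).trans (add_le_add ih (hb l (by omega))))
      _ ≤ (2 * D * B ^ 2) ^ (l + 1) := by
          have hBB : B ≤ B ^ 2 := by nlinarith
          rw [pow_succ (2 * (D : ℝ) * B ^ 2) l]
          nlinarith [mul_le_mul_of_nonneg_left hC (by positivity : (0 : ℝ) ≤ D * B ^ 2),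
            mul_le_mul_of_nonneg_left hBB (by positivity : (0 : ℝ) ≤ D * (2 * D * B ^ 2) ^ l)]

theorem norm_reluForward_sub_le (hD : 1 ≤ D) (hB : 1 ≤ B) (hx : ‖x‖ ≤ 1) {δ : ℝ} (hδ : 0 ≤ δ)
    {l : ℕ} (hdims : ∀ m < l, dims m ≤ D) (hW : ∀ m < l, ∀ i j, |W m i j| ≤ B)
    (hW' : ∀ m < l, ∀ i j, |W' m i j| ≤ B) (hb : ∀ m < l, ‖b m‖ ≤ B)
    (hWW' : ∀ m < l, ∀ i j, |W m i j - W' m i j| ≤ δ) (hbb' : ∀ m < l, ‖b m - b' m‖ ≤ δ) :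
    ‖reluForward dims W b l x - reluForward dims W' b' l x‖ ≤ δ * (4 * D * B ^ 2) ^ l := by
  induction l with
  | zero => simpa [reluForward] using hδ
  | succ l ih =>
    have ih := ih (fun m hm => hdims m (by omega)) (fun m hm => hW m (by omega))
      (fun m hm => hW' m (by omega)) (fun m hm => hb m (by omega))
      (fun m hm => hWW' m (by omega)) (fun m hm => hbb' m (by omega))
    set h := reluForward dims W b l x
    set h' := reluForward dims W' b' l x
    have hh := norm_reluForward_le (l := l) hD hB hx (fun m hm => hdims m (by omega))
      (fun m hm => hW m (by omega)) (fun m hm => hb m (by omega))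
    have hu : ‖(h - b l)⁺‖ ≤ (2 * D * B ^ 2) ^ l + B :=
      (norm_posPart_le_norm _).trans ((norm_sub_le _ _).trans (add_le_add hh (hb l (by omega))))
    have huu' : ‖(h - b l)⁺ - (h' - b' l)⁺‖ ≤ δ * (4 * D * B ^ 2) ^ l + δ := by
      refine (norm_posPart_sub_posPart_le _ _).trans ?_
      rw [sub_sub_sub_comm]
      exact (norm_sub_le _ _).trans (add_le_add ih (hbb' l (by omega)))
    have hdl : (dims l : ℝ) ≤ D := by exact_mod_cast hdims l (by omega)
    have hD' : (1 : ℝ) ≤ D := by exact_mod_cast hD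
    have hCs : (2 * D * B ^ 2 : ℝ) ^ l ≤ (4 * D * B ^ 2) ^ l := by gcongr; linarith
    have hs : 1 ≤ (4 * D * B ^ 2 : ℝ) ^ l := one_le_pow₀ (by nlinarith)
    calc ‖reluForward dims W b (l + 1) x - reluForward dims W' b' (l + 1) x‖
        = ‖(W l - W' l) *ᵥ (h - b l)⁺ + W' l *ᵥ ((h - b l)⁺ - (h' - b' l)⁺)‖ := by
          rw [Matrix.sub_mulVec, Matrix.mulVec_sub, sub_add_sub_cancel]
          rfl
      _ ≤ dims l * δ * ‖(h - b l)⁺‖ + dims l * B * ‖(h - b l)⁺ - (h' - b' l)⁺‖ :=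
          (norm_add_le _ _).trans <| add_le_add
            (Matrix.norm_mulVec_le_of_abs_le hδ (hWW' l (by omega)) _)
            (Matrix.norm_mulVec_le_of_abs_le (by linarith) (hW' l (by omega)) _)
      _ ≤ D * δ * ((2 * D * B ^ 2) ^ l + B) + D * B * (δ * (4 * D * B ^ 2) ^ l + δ) := by
          gcongr
      _ ≤ δ * (4 * D * B ^ 2) ^ (l + 1) := by
          -- with `C = 2DB²` the error recursion is `e' ≤ (C/2) e + (3C/2) δ C^l`, closed by `(2C)^l`
          have hBB : B ≤ B ^ 2 := by nlinarith
          rw [pow_succ (4 * (D : ℝ) * B ^ 2) l]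
          nlinarith [mul_le_mul_of_nonneg_left hCs (by positivity : (0 : ℝ) ≤ D * δ),
            mul_le_mul_of_nonneg_left hs (by positivity : (0 : ℝ) ≤ D * δ * B ^ 2),
            mul_le_mul_of_nonneg_left hBB
              (by positivity : (0 : ℝ) ≤ D * δ * (1 + (4 * D * B ^ 2) ^ l))]

end Perturbation

section ZeroPad

def zeroPad {α : Type*} [Zero α] {n : ℕ} (D : ℕ) (v : Fin n → α) : Fin D → α :=
  fun i => if h : (i : ℕ) < n then v ⟨i, h⟩ else 0

variable {α : Type*} {n D : ℕ}

theorem zeroPad_castLE [Zero α] (h : n ≤ D) (v : Fin n → α) (j : Fin n) :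
    zeroPad D v (Fin.castLE h j) = v j := by
  simp [zeroPad]

theorem zeroPad_of_le [Zero α] (v : Fin n → α) {i : Fin D} (hi : n ≤ i) : zeroPad D v i = 0 :=
  dif_neg (by omega)

theorem sum_zeroPad [AddCommMonoid α] (h : n ≤ D) (v : Fin n → α) :
    ∑ i, zeroPad D v i = ∑ i, v i :=
  (Fintype.sum_of_injective (Fin.castLE h) (Fin.castLE_injective h) _ _
    (fun i hi => zeroPad_of_le v <| le_of_not_gt fun hin => hi ⟨⟨i, hin⟩, rfl⟩)
    (fun j => (zeroPad_castLE h v j).symm)).symm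

theorem zeroPad_sub [SubNegZeroMonoid α] (u v : Fin n → α) :
    zeroPad D (u - v) = zeroPad D u - zeroPad D v := by
  ext i
  by_cases hi : (i : ℕ) < n <;> simp [zeroPad, hi]

theorem zeroPad_mul [MulZeroClass α] (u v : Fin n → α) :
    zeroPad D (u * v) = zeroPad D u * zeroPad D v := by
  ext i
  by_cases hi : (i : ℕ) < n <;> simp [zeroPad, hi]

theorem zeroPad_posPart [Lattice α] [AddGroup α] (v : Fin n → α) :
    zeroPad D v⁺ = (zeroPad D v)⁺ := by
  ext i
  by_cases hi : (i : ℕ) < n <;> simp [zeroPad, hi]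

theorem norm_zeroPad_le [SeminormedAddGroup α] (v : Fin n → α) : ‖zeroPad D v‖ ≤ ‖v‖ :=
  pi_norm_le_iff_of_nonneg (norm_nonneg v) |>.2 fun i => by
    unfold zeroPad
    split_ifs
    · exact norm_le_pi_norm v _
    · simp

theorem abs_zeroPad_le {v : Fin n → ℝ} {B : ℝ} (hB : 0 ≤ B) (hv : ∀ j, |v j| ≤ B) (i : Fin D) :
    |zeroPad D v i| ≤ B := by
  unfold zeroPad
  split_ifs
  · exact hv _
  · simpa using hB

theorem dotProduct_zeroPad [NonUnitalNonAssocSemiring α] (h : n ≤ D) (u v : Fin n → α) :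
    zeroPad D u ⬝ᵥ zeroPad D v = u ⬝ᵥ v := by
  simp only [dotProduct, ← Pi.mul_apply, ← zeroPad_mul, sum_zeroPad h]

def Matrix.zeroPad [Zero α] {m : ℕ} (D : ℕ) (M : Matrix (Fin m) (Fin n) α) :
    Matrix (Fin D) (Fin D) α :=
  _root_.zeroPad D fun i => _root_.zeroPad D (M i)

theorem Matrix.abs_zeroPad_le {m : ℕ} {M : Matrix (Fin m) (Fin n) ℝ} {B : ℝ} (hB : 0 ≤ B)
    (hM : ∀ i j, |M i j| ≤ B) (i j : Fin D) : |M.zeroPad D i j| ≤ B := by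
  unfold Matrix.zeroPad _root_.zeroPad
  split_ifs
  · exact _root_.abs_zeroPad_le hB (hM _) j
  · simpa using hB

theorem zeroPad_mulVec [NonUnitalNonAssocSemiring α] {m : ℕ} (h : n ≤ D)
    (M : Matrix (Fin m) (Fin n) α) (v : Fin n → α) :
    zeroPad D (M *ᵥ v) = M.zeroPad D *ᵥ zeroPad D v := by
  ext i
  show _ = M.zeroPad D i ⬝ᵥ zeroPad D v
  by_cases hi : (i : ℕ) < m
  · rw [Matrix.zeroPad, zeroPad, zeroPad, dif_pos hi, dif_pos hi, dotProduct_zeroPad h]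
    rfl
  · rw [Matrix.zeroPad, zeroPad, zeroPad, dif_neg hi, dif_neg hi, zero_dotProduct]

end ZeroPad

theorem zeroPad_reluForward {dims : ℕ → ℕ}
    {W : (l : ℕ) → Matrix (Fin (dims (l + 1))) (Fin (dims l)) ℝ} {b : (l : ℕ) → Fin (dims l) → ℝ}
    {D : ℕ} {W' : ℕ → Matrix (Fin D) (Fin D) ℝ} {b' : ℕ → Fin D → ℝ} {l : ℕ}
    (hdims : ∀ m < l, dims m ≤ D) (hW' : ∀ m < l, W' m = (W m).zeroPad D)
    (hb' : ∀ m < l, b' m = zeroPad D (b m)) (x : Fin (dims 0) → ℝ) :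
    zeroPad D (reluForward dims W b l x) = reluForward (fun _ => D) W' b' l (zeroPad D x) := by
  induction l with
  | zero => rfl
  | succ l ih =>
    rw [reluForward_succ, reluForward_succ, zeroPad_mulVec (hdims l (by omega)), zeroPad_posPart,
      zeroPad_sub, ih (fun m hm => hdims m (by omega)) (fun m hm => hW' m (by omega))
        (fun m hm => hb' m (by omega)), hW' l (by omega), hb' l (by omega)]

section NetParam

variable {L D : ℕ}

/-- Coordinates of a ReLU network of depth `L` and constant width `D`: the weight
`W^{(l)}_{ij}` sits at `inl (l, i, j)` and the bias `b^{(l)}_j` at `inr (l, j)`. -/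
abbrev NetParam (L D : ℕ) : Type := (Fin L × Fin D × Fin D) ⊕ (Fin L × Fin D)

def netWeight (θ : NetParam L D → ℝ) (l : ℕ) : Matrix (Fin D) (Fin D) ℝ :=
  if h : l < L then Matrix.of fun i j => θ (.inl (⟨l, h⟩, i, j)) else 0

def netBias (θ : NetParam L D → ℝ) (l : ℕ) : Fin D → ℝ :=
  if h : l < L then fun j => θ (.inr (⟨l, h⟩, j)) else 0

/-- The outputs of the last layer are summed, as in `FnnMem`, whose last layer has width one. -/
noncomputable def netEval (p : ℕ) (θ : NetParam L D → ℝ) (x : Fin p → ℝ) : ℝ :=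
  ∑ i, reluForward (fun _ => D) (netWeight θ) (netBias θ) L (zeroPad D x) i

theorem abs_netWeight_le (θ : NetParam L D → ℝ) (l : ℕ) (i j : Fin D) :
    |netWeight θ l i j| ≤ ‖θ‖ := by
  unfold netWeight
  split_ifs
  · exact norm_le_pi_norm θ _
  · simp

theorem norm_netBias_le (θ : NetParam L D → ℝ) (l : ℕ) : ‖netBias θ l‖ ≤ ‖θ‖ := by
  unfold netBias
  split_ifs
  · exact pi_norm_le_iff_of_nonneg (norm_nonneg θ) |>.2 fun j => norm_le_pi_norm θ _
  · simp

theorem netWeight_sub (θ θ' : NetParam L D → ℝ) (l : ℕ) :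
    netWeight θ l - netWeight θ' l = netWeight (θ - θ') l := by
  unfold netWeight
  split_ifs
  · ext; simp
  · simp

theorem netBias_sub (θ θ' : NetParam L D → ℝ) (l : ℕ) :
    netBias θ l - netBias θ' l = netBias (θ - θ') l := by
  unfold netBias
  split_ifs
  · ext; simp
  · simp

theorem abs_netEval_sub_le {p : ℕ} {R : ℝ} (hD : 1 ≤ D) (hR : 1 ≤ R) {θ θ' : NetParam L D → ℝ}
    (hθ : ‖θ‖ ≤ R) (hθ' : ‖θ'‖ ≤ R) {x : Fin p → ℝ} (hx : ‖x‖ ≤ 1) :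
    |netEval p θ x - netEval p θ' x| ≤ D * (‖θ - θ'‖ * (4 * D * R ^ 2) ^ L) := by
  have hnet := norm_reluForward_sub_le (l := L) hD hR ((norm_zeroPad_le x).trans hx)
    (norm_nonneg (θ - θ')) (fun _ _ => le_rfl) (fun m _ => (abs_netWeight_le θ m · · |>.trans hθ))
    (fun m _ => (abs_netWeight_le θ' m · · |>.trans hθ')) (fun m _ => (norm_netBias_le θ m).trans hθ)
    (fun m _ i j => by rw [← Matrix.sub_apply, netWeight_sub]; exact abs_netWeight_le _ m i j)
    (fun m _ => by rw [netBias_sub]; exact norm_netBias_le _ m)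
  calc |netEval p θ x - netEval p θ' x|
      = ‖∑ i, (reluForward (fun _ => D) (netWeight θ) (netBias θ) L (zeroPad D x) -
          reluForward (fun _ => D) (netWeight θ') (netBias θ') L (zeroPad D x)) i‖ := by
        rw [netEval, netEval, ← Finset.sum_sub_distrib, Real.norm_eq_abs]; rfl
    _ ≤ ∑ _i : Fin D, ‖θ - θ'‖ * (4 * D * R ^ 2) ^ L :=
        (norm_sum_le _ _).trans (Finset.sum_le_sum fun i _ => (norm_le_pi_norm _ i).trans hnet)
    _ = D * (‖θ - θ'‖ * (4 * D * R ^ 2) ^ L) := by simp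

end NetParam

theorem FnnMem.exists_netEval_eq {p L K D : ℕ} {B : ℝ} {f : (Fin p → ℝ) → ℝ}
    (hf : FnnMem p L K B f) (hB : 0 ≤ B) (hpD : p ≤ D) (hKD : K ≤ D) (hD : 1 ≤ D) :
    ∃ θ : NetParam L D → ℝ, ‖θ‖ ≤ B ∧ ∀ x, f x = netEval p θ x := by
  obtain ⟨dims, rfl, hdimsL, hdims, W, b, hW, hb, hfx⟩ := hf
  have hdimsD : ∀ m ≤ L, dims m ≤ D := by
    intro m hm
    rcases Nat.eq_zero_or_pos m with rfl | hm0
    · exact hpD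
    rcases hm.lt_or_eq with hmL | rfl
    · exact hdims m hm0 hmL ▸ hKD
    · omega
  let θ : NetParam L D → ℝ :=
    Sum.elim (fun q => (W q.1).zeroPad D q.2.1 q.2.2) (fun q => zeroPad D (b q.1) q.2)
  have hWθ : ∀ m < L, netWeight θ m = (W m).zeroPad D := fun m hm => by
    rw [netWeight, dif_pos hm]; rfl
  have hbθ : ∀ m < L, netBias θ m = zeroPad D (b m) := fun m hm => by
    rw [netBias, dif_pos hm]; rfl
  refine ⟨θ, pi_norm_le_iff_of_nonneg hB |>.2 ?_, fun x => ?_⟩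
  · rintro (⟨l, i, j⟩ | ⟨l, j⟩)
    · exact Matrix.abs_zeroPad_le hB (hW l l.2) i j
    · exact abs_zeroPad_le hB (hb l l.2) j
  · rw [hfx, netEval, ← sum_zeroPad (hdimsD L le_rfl),
      zeroPad_reluForward (fun m hm => hdimsD m hm.le) hWθ hbθ]
    rfl

theorem exists_finset_abs_sub_le {R δ : ℝ} (hδ : 0 < δ) :
    ∃ S : Finset ℝ, S.card ≤ 2 * ⌈R / δ⌉₊ + 1 ∧ ∀ w, |w| ≤ R → ∃ y ∈ S, |w - y| ≤ δ := by
  set N := ⌈R / δ⌉₊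
  refine ⟨(Finset.Icc (-N : ℤ) N).image (fun k : ℤ => k * δ), ?_, fun w hw => ?_⟩
  · refine Finset.card_image_le.trans ?_
    rw [Int.card_Icc]
    omega
  have hwδ : |w / δ| ≤ N := by
    rw [abs_div, abs_of_pos hδ]
    exact (div_le_div_of_nonneg_right hw hδ.le).trans (Nat.le_ceil _)
  refine ⟨⌊w / δ⌋ * δ, Finset.mem_image_of_mem _ (Finset.mem_Icc.2 ⟨?_, ?_⟩), ?_⟩
  · exact Int.le_floor.2 (by push_cast; linarith [neg_abs_le (w / δ)])
  · exact_mod_cast (Int.floor_le _).trans ((le_abs_self _).trans hwδ)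
  · rw [← Int.self_sub_fract, sub_mul, div_mul_cancel₀ w hδ.ne', sub_sub_cancel,
      abs_of_nonneg (by positivity)]
    exact mul_le_of_le_one_left hδ.le (Int.fract_lt_one _).le

theorem exists_finset_cover_of_approx {ι α : Type*} [Fintype ι] (Φ : (ι → ℝ) → α → ℝ)
    (s : Set α) {R δ η : ℝ} (hδ : 0 < δ)
    (hΦ : ∀ θ θ', ‖θ‖ ≤ R → ‖θ - θ'‖ ≤ δ → ∀ x ∈ s, |Φ θ x - Φ θ' x| ≤ η) :
    ∃ G : Finset (α → ℝ), G.card ≤ (2 * ⌈R / δ⌉₊ + 1) ^ Fintype.card ι ∧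
      ∀ θ, ‖θ‖ ≤ R → ∃ g ∈ G, ∀ x ∈ s, |Φ θ x - g x| ≤ η := by
  classical
  obtain ⟨S, hS, hSR⟩ := exists_finset_abs_sub_le (R := R) hδ
  refine ⟨(Fintype.piFinset fun _ => S).image Φ, ?_, fun θ hθ => ?_⟩
  · refine Finset.card_image_le.trans ?_
    rw [Fintype.card_piFinset, Finset.prod_const, Finset.card_univ]
    exact Nat.pow_le_pow_left hS _
  choose θ' hθ'S hθθ' using fun i =>
    hSR (θ i) ((Real.norm_eq_abs _).symm.trans_le ((norm_le_pi_norm θ i).trans hθ))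
  exact ⟨Φ θ', Finset.mem_image_of_mem _ (Fintype.mem_piFinset.2 hθ'S),
    hΦ θ θ' hθ (pi_norm_le_iff_of_nonneg hδ.le |>.2 hθθ')⟩

theorem norm_le_one_of_mem_unitCube {p : ℕ} {x : Fin p → ℝ} (hx : x ∈ unitCube p) : ‖x‖ ≤ 1 :=
  pi_norm_le_iff_of_nonneg zero_le_one |>.2 fun i => by
    rw [Real.norm_eq_abs, abs_le]
    exact ⟨by linarith [(hx i).1], (hx i).2⟩

theorem exists_finset_cover_fnnMem {p L K D : ℕ} {B ε : ℝ} (hB : 1 ≤ B) (hε : 0 < ε)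
    (hε1 : ε ≤ 1) (hpD : p ≤ D) (hKD : K ≤ D) (hD : 1 ≤ D) :
    ∃ G : Finset ((Fin p → ℝ) → ℝ),
      G.card ≤ (2 * ⌈B * (D * (16 * D * B ^ 2) ^ L) / ε⌉₊ + 1) ^ (L * (D * D) + L * D) ∧
      ∀ f, FnnMem p L K B f → ∃ g ∈ G, ∀ x ∈ unitCube p, |f x - g x| ≤ ε := by
  set Λ : ℝ := D * (16 * D * B ^ 2) ^ L
  have hΛ : 1 ≤ Λ := one_le_mul_of_one_le_of_one_le (by exact_mod_cast hD)
    (one_le_pow₀ (by nlinarith [(by exact_mod_cast hD : (1 : ℝ) ≤ D)]))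
  have hδ : 0 < ε / Λ := by positivity
  obtain ⟨G, hG, hcover⟩ := exists_finset_cover_of_approx (netEval (L := L) (D := D) p)
    (unitCube p) (R := B) (η := ε) hδ fun θ θ' hθ hθθ' x hx => by
      have hθ' : ‖θ'‖ ≤ 2 * B := by
        have hδ1 : ε / Λ ≤ 1 := (div_le_one₀ (by positivity)).2 (hε1.trans hΛ)
        linarith [norm_le_norm_add_norm_sub' θ' θ, norm_sub_rev θ θ']
      calc |netEval p θ x - netEval p θ' x|
          ≤ D * (‖θ - θ'‖ * (4 * D * (2 * B) ^ 2) ^ L) :=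
            abs_netEval_sub_le hD (by linarith) (by linarith) hθ' (norm_le_one_of_mem_unitCube hx)
        _ ≤ D * (ε / Λ * (16 * D * B ^ 2) ^ L) := by
            rw [show 4 * (D : ℝ) * (2 * B) ^ 2 = 16 * D * B ^ 2 by ring]
            gcongr
        _ = ε / Λ * Λ := by ring
        _ = ε := div_mul_cancel₀ ε (by positivity)
  refine ⟨G, ?_, fun f hf => ?_⟩
  · simpa [div_div_eq_mul_div] using hG
  obtain ⟨θ, hθ, hfθ⟩ := hf.exists_netEval_eq (by linarith) hpD hKD hD
  obtain ⟨g, hgG, hg⟩ := hcover θ hθ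
  exact ⟨g, hgG, fun x hx => hfθ x ▸ hg x hx⟩

theorem natCast_two_mul_ceil_add_one_le {r : ℝ} (hr : 1 ≤ r) :
    ((2 * ⌈r⌉₊ + 1 : ℕ) : ℝ) ≤ 5 * r := by
  have := Nat.ceil_lt_add_one (zero_le_one.trans hr)
  push_cast
  linarith

theorem grid_size_le_pow {B ε D P K X : ℝ} {L : ℕ} (hB : 1 ≤ B) (hε : 0 < ε) (hε1 : ε ≤ 1)
    (hP : 1 ≤ P) (hD : 1 ≤ D) (hDK : D ≤ P * K) (hKX : K ≤ X) (hεX : ε⁻¹ ≤ X) (hL : 2 ≤ L) :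
    ((2 * ⌈B * (D * (16 * D * B ^ 2) ^ L) / ε⌉₊ + 1 : ℕ) : ℝ) ≤
      (16 * P * B ^ 2 * X) ^ (3 * L) := by
  set Y := 16 * P * B ^ 2 * X
  have hX : 1 ≤ X := (one_le_inv₀ hε).2 hε1 |>.trans hεX
  have hB2 : 1 ≤ B ^ 2 := one_le_pow₀ hB
  have hA : 16 ≤ 16 * P * B ^ 2 := by nlinarith
  have hXY : X ≤ Y := le_mul_of_one_le_left (by linarith) (by linarith)
  have h16DY : 16 * D * B ^ 2 ≤ Y := by
    calc 16 * D * B ^ 2 ≤ 16 * (P * K) * B ^ 2 := by gcongr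
      _ = 16 * P * B ^ 2 * K := by ring
      _ ≤ Y := mul_le_mul_of_nonneg_left hKX (by linarith)
  have hDY : D ≤ Y := by nlinarith
  have h5BY : 5 * B ≤ Y := by nlinarith
  have hr : 1 ≤ B * (D * (16 * D * B ^ 2) ^ L) / ε := by
    rw [le_div_iff₀ hε, one_mul]
    have : 1 ≤ (16 * D * B ^ 2) ^ L := one_le_pow₀ (by nlinarith)
    nlinarith [one_le_mul_of_one_le_of_one_le hD this]
  calc ((2 * ⌈B * (D * (16 * D * B ^ 2) ^ L) / ε⌉₊ + 1 : ℕ) : ℝ)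
      ≤ 5 * B * (D * (16 * D * B ^ 2) ^ L) * ε⁻¹ := by
        exact (natCast_two_mul_ceil_add_one_le hr).trans_eq (by ring)
    _ ≤ Y * (Y * Y ^ L) * Y := by
        gcongr
        exact hεX.trans hXY
    _ = Y ^ (L + 3) := by ring
    _ ≤ Y ^ (3 * L) := pow_le_pow_right₀ (by linarith) (by omega)

theorem pow_le_exp_mul_log {M Y : ℝ} {k : ℕ} (hM : 0 ≤ M) (hY : 0 < Y) (hMY : M ≤ Y ^ k)
    (n : ℕ) : M ^ n ≤ Real.exp ((k * n : ℕ) * Real.log Y) := by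
  rw [Real.exp_nat_mul, Real.exp_log hY, pow_mul]
  exact pow_le_pow_left₀ hM hMY n

theorem log_mul_le_mul_log {A X : ℝ} (hA : 1 ≤ A) (hX : 1 ≤ Real.log X) :
    Real.log (A * X) ≤ (Real.log A + 1) * Real.log X := by
  have hX0 : X ≠ 0 := by rintro rfl; norm_num at hX
  rw [Real.log_mul (by linarith) hX0]
  nlinarith [Real.log_nonneg hA]

theorem fnn_exponent_le {p L K : ℕ} (hK : 1 ≤ K) :
    3 * L * (L * ((p + K) * (p + K)) + L * (p + K)) ≤ 6 * (p + 1) ^ 2 * (L * K) ^ 2 := by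
  calc 3 * L * (L * ((p + K) * (p + K)) + L * (p + K))
      ≤ 3 * L * (L * ((p + K) * (p + K)) + L * ((p + K) * (p + K))) := by
        gcongr; exact Nat.le_mul_self _
    _ = 6 * (L * (p + K)) ^ 2 := by ring
    _ ≤ 6 * (L * ((p + 1) * K)) ^ 2 := by gcongr; nlinarith
    _ = 6 * (p + 1) ^ 2 * (L * K) ^ 2 := by ring

theorem grid_size_pow_le_exp {p L K : ℕ} {B ε : ℝ} (hB : 1 ≤ B) (hL : 2 ≤ L) (hK : 2 ≤ K)
    (hε : 0 < ε) (hε1 : ε ≤ 1) :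
    ((2 * ⌈B * ((p + K : ℕ) * (16 * (p + K : ℕ) * B ^ 2) ^ L) / ε⌉₊ + 1 : ℕ) : ℝ) ^
        (L * ((p + K) * (p + K)) + L * (p + K)) ≤
      Real.exp (6 * (p + 1) ^ 2 * (Real.log (16 * (p + 1) * B ^ 2) + 1) *
        ((L * K : ℕ) : ℝ) ^ 2 * Real.log (((L * K : ℕ) : ℝ) / ε)) := by
  set A : ℝ := 16 * (p + 1) * B ^ 2
  set X : ℝ := ((L * K : ℕ) : ℝ) / ε
  have hp : (0 : ℝ) ≤ p := p.cast_nonneg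
  have hK1 : (1 : ℝ) ≤ K := by exact_mod_cast (by omega : 1 ≤ K)
  have hA : 1 ≤ A := by nlinarith [one_le_pow₀ (n := 2) hB]
  have hLK : (4 : ℝ) ≤ ((L * K : ℕ) : ℝ) := by exact_mod_cast Nat.mul_le_mul hL hK
  have hLKX : ((L * K : ℕ) : ℝ) ≤ X := le_div_self (by positivity) hε hε1
  have hKX : (K : ℝ) ≤ X := le_trans (by exact_mod_cast Nat.le_mul_of_pos_left K (by omega)) hLKX
  have hεX : ε⁻¹ ≤ X := by
    rw [inv_eq_one_div]
    exact div_le_div_of_nonneg_right (by linarith) hε.le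
  have hlogX : 1 ≤ Real.log X := by
    rw [Real.le_log_iff_exp_le (by positivity)]
    exact Real.exp_one_lt_d9.le.trans (le_trans (by norm_num) (hLK.trans hLKX))
  have hgrid := grid_size_le_pow (P := p + 1) (D := ((p + K : ℕ) : ℝ)) hB hε hε1 (by linarith)
    (by exact_mod_cast (by omega : 1 ≤ p + K)) (by push_cast; nlinarith) hKX hεX hL
  refine (pow_le_exp_mul_log (by positivity) (by positivity) hgrid _).trans ?_
  rw [Real.exp_le_exp]
  calc _ ≤ ((6 * (p + 1) ^ 2 * (L * K) ^ 2 : ℕ) : ℝ) * ((Real.log A + 1) * Real.log X) :=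
        mul_le_mul (by exact_mod_cast fnn_exponent_le (by omega)) (log_mul_le_mul_log hA hlogX)
          (Real.log_nonneg (one_le_mul_of_one_le_of_one_le hA (by linarith))) (by positivity)
    _ = _ := by push_cast; ring

/-- Lemma A.2: metric entropy bound for the non-sparse ReLU class:
for every `p` and `B ≥ 1` there is `c₀ > 0` such that for all `L, K ≥ 2` and
`ε ∈ (0,1)` there is a finite set `G` of functions with
`|G| ≤ exp(c₀ (LK)² log(LK/ε))` that is a sup-norm `ε`-net of `F_nn(L, K, B)` on
`[0,1]^p`; i.e. `log N(ε, F_nn(L,K,B), ‖·‖_∞) ≤ c₀ (LK)² log(LK/ε)`. -/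
theorem fnn_metric_entropy (p : ℕ) (B : ℝ) (hB : 1 ≤ B) :
    ∃ c₀ : ℝ, 0 < c₀ ∧
      ∀ L K : ℕ, 2 ≤ L → 2 ≤ K → ∀ ε : ℝ, 0 < ε → ε < 1 →
        ∃ G : Finset ((Fin p → ℝ) → ℝ),
          (G.card : ℝ) ≤ Real.exp (c₀ * ((L * K : ℕ) : ℝ) ^ 2 *
            Real.log (((L * K : ℕ) : ℝ) / ε)) ∧
          ∀ f : (Fin p → ℝ) → ℝ, FnnMem p L K B f →
            ∃ g ∈ G, ∀ x ∈ unitCube p, |f x - g x| ≤ ε := by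
  have hA : 1 ≤ 16 * (p + 1) * B ^ 2 := by
    nlinarith [(p.cast_nonneg : (0 : ℝ) ≤ p), one_le_pow₀ (n := 2) hB]
  refine ⟨6 * (p + 1) ^ 2 * (Real.log (16 * (p + 1) * B ^ 2) + 1),
    mul_pos (by positivity) (by linarith [Real.log_nonneg hA]), fun L K hL hK ε hε hε1 => ?_⟩
  obtain ⟨G, hG, hcover⟩ := exists_finset_cover_fnnMem (p := p) (L := L) (K := K) (D := p + K)
    hB hε hε1.le (by omega) (by omega) (by omega)
  refine ⟨G, ?_, hcover⟩
  calc (G.card : ℝ) ≤ _ := by exact_mod_cast hG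
    _ ≤ _ := grid_size_pow_le_exp hB hL hK hε hε1.le
end
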